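/- arXiv:1501.01307 — 8 statements merged into one kernel-verified Lean document; each statement's English description precedes it below -/
import Mathlib

section
/- Let O be a Dedekind domain. The graph B₂(O) is connected if and only if every element of SL₂(O) is a product of elementary matrices. -/
/-- The complex of partial bases in rank 2: the simple graph whose vertices are the
vectors `v ∈ R²` belonging to some basis of `R²`, with `v` and `w` adjacent exactly
when `v ≠ w` and `{v, w}` is a basis of `R²`. -/
def partialBasisGraph (R : Type) [CommRing R] :
    SimpleGraph {v : Fin 2 → R // ∃ (b : Module.Basis (Fin 2) R (Fin 2 → R)) (i : Fin 2), b i = v} where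
  Adj v w := v ≠ w ∧
    ∃ b : Module.Basis (Fin 2) R (Fin 2 → R), ({b 0, b 1} : Set (Fin 2 → R)) = {v.1, w.1}
  symm := by
    refine ⟨?_⟩
    rintro v w ⟨hne, b, hb⟩
    exact ⟨hne.symm, b, by rw [hb, Set.pair_comm]⟩
  loopless := by
    refine ⟨?_⟩
    rintro v ⟨hne, -⟩
    exact hne rfl

/-!
Every vertex of `B₂(R)` is the first row of a matrix in `SL₂(R)`, and the two ends of an edge
are, up to a unit, the two rows of one matrix in `SL₂(R)`.

Left multiplication by an elementary matrix fixes one row, so if `SL₂(R)` is generated by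
elementary matrices, induction on the word joins every row to `e₀`. Conversely, two matrices of
`SL₂(R)` with the same first row differ by a lower elementary factor on the left, and the
elementary product `!![1, u; 0, 1] * !![1, 0; -u⁻¹, 1] * !![1, u; 0, 1] = !![0, u; -u⁻¹, 0]`
brings `u • (second row)` to the first row.
Hence "being the first row of an elementary product" spreads along the edges from `e₀` to every
vertex, and from there to every matrix.
-/

open Matrix Module
open scoped MatrixGroups

namespace Matrix.SpecialLinearGroup

variable {R : Type*} [CommRing R]

noncomputable def rowBasis {n : Type*} [Fintype n] [DecidableEq n] (A : SpecialLinearGroup n R) :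
    Basis n R (n → R) :=
  (Pi.basisFun R n).map (toLin' A.transpose)

@[simp]
lemma rowBasis_apply {n : Type*} [Fintype n] [DecidableEq n] (A : SpecialLinearGroup n R)
    (i : n) : rowBasis A i = A i := by
  ext j
  simp [rowBasis, toLin'_apply, coe_transpose]

lemma isUnit_det_of_basis {n : Type*} [Fintype n] [DecidableEq n] (b : Basis n R (n → R)) :
    IsUnit (Matrix.of b).det := by
  rw [← Pi.basisFun_det_apply]
  exact (Pi.basisFun R n).isUnit_det b

lemma exists_row_zero_eq_row_one_eq_smul (b : Basis (Fin 2) R (Fin 2 → R)) :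
    ∃ (A : SL(2, R)) (c : Rˣ), A 0 = b 0 ∧ A 1 = (c : R) • b 1 := by
  obtain ⟨u, hu⟩ := isUnit_det_of_basis b
  refine ⟨⟨Matrix.of ![b 0, (↑u⁻¹ : R) • b 1], ?_⟩, u⁻¹, rfl, rfl⟩
  rw [det_fin_two] at hu ⊢
  simp only [of_apply] at hu
  simp only [of_apply, cons_val', cons_val_zero, cons_val_one, cons_val_fin_one, Pi.smul_apply,
    smul_eq_mul]
  linear_combination u.inv_mul - (↑u⁻¹ : R) * hu

def elemUpper (a : R) : SL(2, R) := ⟨!![1, a; 0, 1], by simp [det_fin_two_of]⟩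

def elemLower (a : R) : SL(2, R) := ⟨!![1, 0; a, 1], by simp [det_fin_two_of]⟩

@[simp]
lemma coe_elemUpper (a : R) : (elemUpper a : Matrix (Fin 2) (Fin 2) R) = !![1, a; 0, 1] := rfl

@[simp]
lemma coe_elemLower (a : R) : (elemLower a : Matrix (Fin 2) (Fin 2) R) = !![1, 0; a, 1] := rfl

variable (R) in
def elementaryMatrices : Set SL(2, R) :=
  {E : SL(2, R) |
    (∃ a : R, (E : Matrix (Fin 2) (Fin 2) R) = !![1, a; 0, 1]) ∨
    (∃ a : R, (E : Matrix (Fin 2) (Fin 2) R) = !![1, 0; a, 1])}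

variable (R) in
def elementarySubmonoid : Submonoid SL(2, R) := Submonoid.closure (elementaryMatrices R)

lemma elemUpper_mem (a : R) : elemUpper a ∈ elementarySubmonoid R :=
  Submonoid.subset_closure (Or.inl ⟨a, rfl⟩)

lemma elemLower_mem (a : R) : elemLower a ∈ elementarySubmonoid R :=
  Submonoid.subset_closure (Or.inr ⟨a, rfl⟩)

lemma exists_row_mul_eq_of_mem_elementaryMatrices {E : SL(2, R)} (hE : E ∈ elementaryMatrices R)
    (M : SL(2, R)) : ∃ j, (E * M) j = M j := by
  rcases hE with ⟨a, ha⟩ | ⟨a, ha⟩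
  · exact ⟨1, funext fun k => by simp [coe_mul, ha, mul_apply, Fin.sum_univ_two]⟩
  · exact ⟨0, funext fun k => by simp [coe_mul, ha, mul_apply, Fin.sum_univ_two]⟩

def weylElement (u : Rˣ) : SL(2, R) :=
  elemUpper (u : R) * elemLower (-(↑u⁻¹ : R)) * elemUpper (u : R)

lemma coe_weylElement (u : Rˣ) :
    (weylElement u : Matrix (Fin 2) (Fin 2) R) = !![0, ↑u; -↑u⁻¹, 0] := by
  simp [weylElement]

lemma weylElement_mem (u : Rˣ) : weylElement u ∈ elementarySubmonoid R :=
  mul_mem (mul_mem (elemUpper_mem _) (elemLower_mem _)) (elemUpper_mem _)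

lemma weylElement_mul_row_zero (u : Rˣ) (A : SL(2, R)) :
    (weylElement u * A) 0 = (u : R) • A 1 := by
  ext j
  simp [coe_weylElement, mul_apply, Fin.sum_univ_two]

/-- The parameter is the lower left entry of `A * M⁻¹`. -/
lemma eq_elemLower_mul_of_row_zero_eq {A M : SL(2, R)} (h : A 0 = M 0) :
    A = elemLower (A 1 0 * M 1 1 - A 1 1 * M 1 0) * M := by
  have hA := A.2
  have hM := M.2
  rw [det_fin_two, congrFun h 0, congrFun h 1] at hA
  rw [det_fin_two] at hM
  refine Subtype.ext (Matrix.ext fun i j => ?_)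
  simp only [coe_mul, coe_elemLower, mul_apply, Fin.sum_univ_two]
  fin_cases i <;> fin_cases j
  · simp [congrFun h 0]
  · simp [congrFun h 1]
  · simp only [Fin.mk_one, Fin.zero_eta, of_apply, cons_val', cons_val_zero, cons_val_one,
      cons_val_fin_one, one_mul]
    linear_combination M 1 0 * hA - A 1 0 * hM
  · simp only [Fin.mk_one, of_apply, cons_val', cons_val_zero, cons_val_one, cons_val_fin_one,
      one_mul]
    linear_combination M 1 1 * hA - A 1 1 * hM

lemma mem_elementarySubmonoid_of_row_zero_eq {A M : SL(2, R)} (hM : M ∈ elementarySubmonoid R)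
    (h : A 0 = M 0) : A ∈ elementarySubmonoid R := by
  rw [eq_elemLower_mul_of_row_zero_eq h]
  exact mul_mem (elemLower_mem _) hM

variable (R) in
def elementaryRows : Set (Fin 2 → R) := {v | ∃ M ∈ elementarySubmonoid R, M 0 = v}

lemma units_smul_row_one_mem_elementaryRows {A : SL(2, R)} (hA : A ∈ elementarySubmonoid R)
    (u : Rˣ) : (u : R) • A 1 ∈ elementaryRows R :=
  ⟨weylElement u * A, mul_mem (weylElement_mem u) hA, weylElement_mul_row_zero u A⟩

end Matrix.SpecialLinearGroup

namespace partialBasisGraph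

open SimpleGraph SpecialLinearGroup

variable {R : Type} [CommRing R]

def rowVertex (A : SL(2, R)) (i : Fin 2) :
    {v : Fin 2 → R // ∃ (b : Basis (Fin 2) R (Fin 2 → R)) (i : Fin 2), b i = v} :=
  ⟨A i, rowBasis A, i, rowBasis_apply A i⟩

lemma reachable_rowVertex_zero_one (A : SL(2, R)) :
    (partialBasisGraph R).Reachable (rowVertex A 0) (rowVertex A 1) := by
  by_cases h : rowVertex A 0 = rowVertex A 1
  · exact h ▸ .refl _
  · exact Adj.reachable ⟨h, rowBasis A, by simp [rowVertex]⟩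

lemma reachable_rowVertex (A : SL(2, R)) (i j : Fin 2) :
    (partialBasisGraph R).Reachable (rowVertex A i) (rowVertex A j) := by
  have h := reachable_rowVertex_zero_one A
  fin_cases i <;> fin_cases j
  exacts [.refl _, h, h.symm, .refl _]

lemma exists_rowVertex_eq
    (v : {v : Fin 2 → R // ∃ (b : Basis (Fin 2) R (Fin 2 → R)) (i : Fin 2), b i = v}) :
    ∃ A : SL(2, R), rowVertex A 0 = v := by
  obtain ⟨-, b, i, rfl⟩ := v
  obtain ⟨A, -, hA, -⟩ := exists_row_zero_eq_row_one_eq_smul (b.reindex (Equiv.swap 0 i))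
  exact ⟨A, Subtype.ext (by simpa [rowVertex] using hA)⟩

lemma exists_row_zero_eq_row_one_eq_smul_of_adj {v w} (h : (partialBasisGraph R).Adj v w) :
    ∃ (A : SL(2, R)) (c : Rˣ), A 0 = v.1 ∧ A 1 = (c : R) • w.1 := by
  obtain ⟨-, b, hb⟩ := h
  rcases Set.pair_eq_pair_iff.mp hb with ⟨h0, h1⟩ | ⟨h0, h1⟩
  · rw [← h0, ← h1]
    exact exists_row_zero_eq_row_one_eq_smul b
  · rw [← h0, ← h1]
    simpa using exists_row_zero_eq_row_one_eq_smul (b.reindex (Equiv.swap 0 1))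

lemma mem_elementaryRows_of_adj {v w} (h : (partialBasisGraph R).Adj v w)
    (hv : v.1 ∈ elementaryRows R) : w.1 ∈ elementaryRows R := by
  obtain ⟨M, hM, hMv⟩ := hv
  obtain ⟨A, c, hA0, hA1⟩ := exists_row_zero_eq_row_one_eq_smul_of_adj h
  have hA : A ∈ elementarySubmonoid R :=
    mem_elementarySubmonoid_of_row_zero_eq hM (hA0.trans hMv.symm)
  simpa [hA1, smul_smul] using units_smul_row_one_mem_elementaryRows hA c⁻¹

lemma mem_elementaryRows_of_reachable {v}
    (h : (partialBasisGraph R).Reachable (rowVertex 1 0) v) : v.1 ∈ elementaryRows R := by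
  rw [reachable_iff_reflTransGen] at h
  induction h with
  | refl => exact ⟨1, one_mem _, rfl⟩
  | tail _ hadj ih => exact mem_elementaryRows_of_adj hadj ih

lemma reachable_rowVertex_of_mem {M : SL(2, R)} (hM : M ∈ elementarySubmonoid R) (i : Fin 2) :
    (partialBasisGraph R).Reachable (rowVertex 1 0) (rowVertex M i) := by
  induction hM using Submonoid.closure_induction_left generalizing i with
  | one => exact reachable_rowVertex 1 0 i
  | mul_left E hE M _ ih =>
    obtain ⟨j, hj⟩ := exists_row_mul_eq_of_mem_elementaryMatrices hE M
    have hvj : rowVertex (E * M) j = rowVertex M j := Subtype.ext hj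
    exact (ih j).trans (hvj ▸ reachable_rowVertex (E * M) j i)

theorem forall_mem_elementarySubmonoid_of_connected (h : (partialBasisGraph R).Connected)
    (A : SL(2, R)) : A ∈ elementarySubmonoid R := by
  obtain ⟨M, hM, hMA⟩ :=
    mem_elementaryRows_of_reachable (h.preconnected (rowVertex 1 0) (rowVertex A 0))
  exact mem_elementarySubmonoid_of_row_zero_eq hM hMA.symm

theorem connected_of_forall_mem_elementarySubmonoid (h : ∀ A, A ∈ elementarySubmonoid R) :
    (partialBasisGraph R).Connected := by
  refine (connected_iff_exists_forall_reachable _).2 ⟨rowVertex 1 0, fun v => ?_⟩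
  obtain ⟨A, rfl⟩ := exists_rowVertex_eq v
  exact reachable_rowVertex_of_mem (h A) 0

end partialBasisGraph

theorem partialBasisGraph_connected_iff_elementary_generation_general
    (O : Type) [CommRing O] :
    (partialBasisGraph O).Connected ↔
      ∀ A : Matrix.SpecialLinearGroup (Fin 2) O,
        A ∈ Submonoid.closure {E : Matrix.SpecialLinearGroup (Fin 2) O |
          (∃ a : O, (E : Matrix (Fin 2) (Fin 2) O) = !![1, a; 0, 1]) ∨
          (∃ a : O, (E : Matrix (Fin 2) (Fin 2) O) = !![1, 0; a, 1])} :=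
  ⟨partialBasisGraph.forall_mem_elementarySubmonoid_of_connected,
    partialBasisGraph.connected_of_forall_mem_elementarySubmonoid⟩

/-- **Theorem.**  For a Dedekind domain `O`, the graph `B₂(O)` is connected if and only if
every element of `SL₂(O)` is a product of elementary matrices. -/
theorem partialBasisGraph_connected_iff_elementary_generation
    (O : Type) [CommRing O] [IsDomain O] [IsDedekindDomain O] :
    (partialBasisGraph O).Connected ↔
      ∀ A : Matrix.SpecialLinearGroup (Fin 2) O,
        A ∈ Submonoid.closure {E : Matrix.SpecialLinearGroup (Fin 2) O |
          (∃ a : O, (E : Matrix (Fin 2) (Fin 2) O) = !![1, a; 0, 1]) ∨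
          (∃ a : O, (E : Matrix (Fin 2) (Fin 2) O) = !![1, 0; a, 1])} :=
  partialBasisGraph_connected_iff_elementary_generation_general O
end

section
/- Let O be a Dedekind domain with fraction field K and M a finitely generated projective O-module. The map sending a direct summand U of M to the K-subspace of M ⊗_O K spanned by the image of U under the natural map M → M ⊗_O K is a bijection from the set of direct summands of M onto the set of K-subspaces of M ⊗_O K, with inverse sending a K-subspace V to the preimage of V under the natural map M → M ⊗_O K. -/
/-!
Both maps are halves of the Galois insertion `Submodule.localized'gi` between `O`-submodules of
`M` and `K`-subspaces of its localization `K ⊗[O] M`, so "span of preimage" is the identity.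
"Preimage of span" fixes `U` as soon as `M ⧸ U` is torsion-free, since `(K ⊗[O] M) ⧸ span U` is
the localization of `M ⧸ U`. A direct summand has torsion-free quotient, being isomorphic to a
complement inside `M`; conversely the quotient by a preimage is torsion-free, hence flat and,
being finitely generated over the Dedekind domain `O`, projective, so the preimage splits off.
-/

open TensorProduct nonZeroDivisors

theorem Module.isTorsionFree_iff_isSMulRegular_nonZeroDivisors {R M : Type*} [CommRing R]
    [AddCommGroup M] [Module R M] :
    Module.IsTorsionFree R M ↔ ∀ c : R⁰, IsSMulRegular M c :=
  ⟨fun h c => h.isSMulRegular (isRegular_iff_mem_nonZeroDivisors.mpr c.2),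
    fun h => ⟨fun r hr => h ⟨r, isRegular_iff_mem_nonZeroDivisors.mp hr⟩⟩⟩

theorem IsDedekindDomain.projective_of_isTorsionFree {R M : Type*} [CommRing R]
    [IsDedekindDomain R] [AddCommGroup M] [Module R M] [Module.Finite R M]
    [Module.IsTorsionFree R M] : Module.Projective R M :=
  have := Module.finitePresentation_of_finite R M
  Module.Flat.projective_of_finitePresentation

namespace Submodule

section Ring

variable {R M : Type*} [Ring R] [AddCommGroup M] [Module R M]

theorem isTorsionFree_quotient_of_isCompl [Module.IsTorsionFree R M] {U W : Submodule R M}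
    (h : IsCompl U W) : Module.IsTorsionFree R (M ⧸ U) :=
  (quotientEquivOfIsCompl U W h).injective.moduleIsTorsionFree _ (map_smul _)

theorem exists_isCompl_of_projective_quotient (U : Submodule R M) [Module.Projective R (M ⧸ U)] :
    ∃ W : Submodule R M, IsCompl U W := by
  obtain ⟨g, hg⟩ := Module.projective_lifting_property U.mkQ LinearMap.id U.mkQ_surjective
  have hidem : IsIdempotentElem (g ∘ₗ U.mkQ) := by
    rw [IsIdempotentElem, Module.End.mul_eq_comp, LinearMap.comp_assoc,
      ← LinearMap.comp_assoc U.mkQ, hg, LinearMap.id_comp]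
  have hker : LinearMap.ker (g ∘ₗ U.mkQ) = U := by
    rw [LinearMap.ker_comp_of_ker_eq_bot _ (LinearMap.ker_eq_bot_of_inverse hg), ker_mkQ]
  exact ⟨_, hker ▸ (LinearMap.IsIdempotentElem.isCompl hidem).symm⟩

end Ring

section Localization

variable {R M N : Type*} (S : Type*) [CommRing R] [CommRing S] [AddCommGroup M] [AddCommGroup N]
  [Module R M] [Module R N] [Algebra R S] [Module S N] [IsScalarTower R S N]
  (p : Submonoid R) [IsLocalization p S] (f : M →ₗ[R] N)

theorem comap_localized'_eq_self [IsLocalizedModule p f] (U : Submodule R M)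
    (hU : ∀ c : p, IsSMulRegular (M ⧸ U) c) :
    comap f ((U.localized' S p f).restrictScalars R) = U := by
  have hinj : Function.Injective (U.toLocalizedQuotient' S p f) :=
    (IsLocalizedModule.injective_iff_isRegular p _).mpr hU
  ext m
  rw [mem_comap, restrictScalars_mem, ← Quotient.mk_eq_zero, ← U.toLocalizedQuotient'_mk S p f,
    map_eq_zero_iff _ hinj, Quotient.mk_eq_zero]

theorem isSMulRegular_quotient_comap (V : Submodule S N) (c : p) :
    IsSMulRegular (M ⧸ comap f (V.restrictScalars R)) c := by
  rintro ⟨m⟩ ⟨n⟩ hmn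
  have hunit : IsUnit (algebraMap R S c) := IsLocalization.map_units S c
  simp only [Quotient.quot_mk_eq_mk, ← Quotient.mk_smul, Quotient.eq, ← smul_sub,
    mem_comap, restrictScalars_mem] at hmn ⊢
  rwa [LinearMap.map_smul_of_tower, Submonoid.smul_def, ← algebraMap_smul S,
    smul_mem_iff_of_isUnit _ hunit] at hmn

end Localization

end Submodule

theorem summand_subspace_bijection_general
    (O : Type) [CommRing O] [IsDedekindDomain O]
    (K : Type) [Field K] [Algebra O K] [IsFractionRing O K]
    (M : Type) [AddCommGroup M] [Module O M]
    [Module.Finite O M] [Module.Projective O M] :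
    (∀ U : Submodule O M, (∃ W : Submodule O M, IsCompl U W) →
      Submodule.comap (TensorProduct.mk O K M 1)
        ((Submodule.span K ((TensorProduct.mk O K M 1) '' (U : Set M))).restrictScalars O)
        = U) ∧
    (∀ V : Submodule K (K ⊗[O] M),
      (∃ W : Submodule O M,
        IsCompl (Submodule.comap (TensorProduct.mk O K M 1) (V.restrictScalars O)) W) ∧
      Submodule.span K ((TensorProduct.mk O K M 1) ''
        ((Submodule.comap (TensorProduct.mk O K M 1) (V.restrictScalars O)) : Set M)) = V) := by
  set ι := TensorProduct.mk O K M 1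
  refine ⟨fun U ⟨W, hUW⟩ => ?_, fun V => ⟨?_, ?_⟩⟩
  · have := Submodule.isTorsionFree_quotient_of_isCompl hUW
    rw [← Submodule.localized'_eq_span K O⁰]
    exact U.comap_localized'_eq_self K O⁰ ι
      (Module.isTorsionFree_iff_isSMulRegular_nonZeroDivisors.mp this)
  · have : Module.IsTorsionFree O (M ⧸ Submodule.comap ι (V.restrictScalars O)) :=
      Module.isTorsionFree_iff_isSMulRegular_nonZeroDivisors.mpr
        (Submodule.isSMulRegular_quotient_comap K O⁰ ι V)
    have := IsDedekindDomain.projective_of_isTorsionFree (R := O)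
      (M := M ⧸ Submodule.comap ι (V.restrictScalars O))
    exact Submodule.exists_isCompl_of_projective_quotient _
  · rw [← Submodule.localized'_eq_span K O⁰]
    exact (Submodule.localized'gi K O⁰ ι).l_u_eq V

/-- **Lemma.**  Let `O` be a Dedekind domain with fraction field `K` and `M` a finitely
generated projective `O`-module.  Sending a direct summand `U` of `M` to the `K`-span of
its image under the natural map `M → K ⊗[O] M`, `m ↦ 1 ⊗ m`, is a bijection from the set
of direct summands of `M` onto the set of `K`-subspaces of `K ⊗[O] M`, with inverse
sending a subspace `V` to the preimage of `V` under `M → K ⊗[O] M`. -/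
theorem summand_subspace_bijection
    (O : Type) [CommRing O] [IsDomain O] [IsDedekindDomain O]
    (K : Type) [Field K] [Algebra O K] [IsFractionRing O K]
    (M : Type) [AddCommGroup M] [Module O M]
    [Module.Finite O M] [Module.Projective O M] :
    (∀ U : Submodule O M, (∃ W : Submodule O M, IsCompl U W) →
      Submodule.comap (TensorProduct.mk O K M 1)
        ((Submodule.span K ((TensorProduct.mk O K M 1) '' (U : Set M))).restrictScalars O)
        = U) ∧
    (∀ V : Submodule K (K ⊗[O] M),
      (∃ W : Submodule O M,
        IsCompl (Submodule.comap (TensorProduct.mk O K M 1) (V.restrictScalars O)) W) ∧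
      Submodule.span K ((TensorProduct.mk O K M 1) ''
        ((Submodule.comap (TensorProduct.mk O K M 1) (V.restrictScalars O)) : Set M)) = V) :=
  summand_subspace_bijection_general O K M
end

section
/- Let O be a Dedekind domain with fraction field K and let n ≥ 1. A family v₁, …, v_k of elements of O^n extends to a basis of the free module O^n if and only if the submodule span_O(v₁, …, v_k) is a direct summand of O^n of rank k (that is, dim_K of its K-span in K^n equals k). -/
/-!
Passing to the fraction field, the rank condition says exactly that the family is linearly
independent; an independent family spanning a direct summand `M ≅ O^k` of `O^n` extends to a basis
as soon as a complement `W` of `M` is free. Since `W ⊕ O^k ≅ O^n`, everything rests on stably free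
modules over a Dedekind domain being free, i.e. on the kernel of a surjection `O^r → O` (a
unimodular row `(a₁, …, a_r)`) being free.

For `r ≥ 3` the row can be shortened: if the ideal `J` generated by `a₁, …, a_{r-2}` is nonzero,
then `O/J` has only finitely many maximal ideals and the Chinese remainder theorem gives `s` with
`J + (a_{r-1} + s a_r) = O`. After a shear of `O^r`, the kernel of the row becomes the kernel of the
shorter row `(a₁, …, a_{r-2}, a_{r-1} + s a_r)` plus a free summand `O`. Rows of length two cannot
be shortened in general (take `(2, 5)` over `ℤ`), but their kernel is spanned by `(a₂, -a₁)`.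
-/

namespace LinearMap

variable {R P Q V : Type*} [Ring R] [AddCommGroup P] [Module R P] [AddCommGroup Q] [Module R Q]
  [AddCommGroup V] [Module R V]

theorem map_graph_add (φ : P × Q →ₗ[R] V) (t : P →ₗ[R] Q) (p : P) (q : Q) :
    φ (p, t p + q) = φ (p, t p) + φ (0, q) := by
  rw [← map_add, Prod.mk_add_mk, add_zero]

def kerEquivKerCompProd (φ : P × Q →ₗ[R] V) (t : P →ₗ[R] Q) (h : Q →ₗ[R] P)
    (hh : ∀ q, φ (h q, t (h q)) = φ (0, q)) :
    ker φ ≃ₗ[R] ker (φ ∘ₗ id.prod t) × Q where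
  toFun x := (⟨x.1.1 + h (x.1.2 - t x.1.1), by
      have hx : φ (x.1.1, t x.1.1 + (x.1.2 - t x.1.1)) = 0 := by simp
      rw [map_graph_add, ← hh] at hx
      rw [mem_ker, ← hx, ← map_add]
      simp⟩, x.1.2 - t x.1.1)
  invFun y := ⟨(y.1.1 - h y.2, t (y.1.1 - h y.2) + y.2), by
      have hy : φ (y.1.1, t y.1.1) = 0 := y.1.2
      rw [mem_ker, map_graph_add, ← hh, ← map_add, map_sub, ← hy]
      simp [hy]⟩
  map_add' x y := by
    ext <;> simp only [Submodule.coe_add, Prod.fst_add, Prod.snd_add, map_add, map_sub] <;> abel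
  map_smul' c x := by ext <;> simp [smul_sub]
  left_inv x := by ext <;> simp
  right_inv y := by ext <;> simp

def kerCompEquiv {N N' : Type*} [AddCommGroup N] [Module R N] [AddCommGroup N'] [Module R N']
    (φ : N' →ₗ[R] V) (e : N ≃ₗ[R] N') : ker (φ ∘ₗ e.toLinearMap) ≃ₗ[R] ker φ :=
  e.ofSubmodules _ _ (by rw [ker_comp, Submodule.map_comap_eq_of_surjective e.surjective])

end LinearMap

open LinearMap

section

variable {O : Type*} [CommRing O]

theorem ker_eq_span_of_surjective_prod (φ : O × O →ₗ[O] O) (hφ : Function.Surjective φ) :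
    ker φ = O ∙ (φ (0, 1), -φ (1, 0)) := by
  have hφ_apply (c d : O) : φ (c, d) = c * φ (1, 0) + d * φ (0, 1) := by
    rw [← smul_eq_mul, ← smul_eq_mul, ← map_smul, ← map_smul, ← map_add]; simp
  obtain ⟨⟨s, t⟩, hst⟩ := hφ 1
  rw [hφ_apply] at hst
  refine le_antisymm ?_ ((Submodule.span_singleton_le_iff_mem _ _).2 ?_)
  · rintro ⟨c, d⟩ hcd
    rw [mem_ker, hφ_apply] at hcd
    refine Submodule.mem_span_singleton.2 ⟨t * c - s * d, ?_⟩
    ext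
    · simp only [Prod.smul_mk, smul_eq_mul]
      linear_combination c * hst - s * hcd
    · simp only [Prod.smul_mk, smul_eq_mul]
      linear_combination d * hst - t * hcd
  · rw [mem_ker, hφ_apply]; ring

theorem free_ker_of_surjective_prod [IsDomain O] (φ : O × O →ₗ[O] O)
    (hφ : Function.Surjective φ) :
    Module.Free O (ker φ) := by
  rw [ker_eq_span_of_surjective_prod φ hφ]
  have hg : (φ (0, 1), -φ (1, 0)) ≠ 0 := by
    intro h
    have hφ0 : φ = 0 := by
      ext <;> simp_all
    obtain ⟨_, h1⟩ := hφ 1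
    rw [hφ0, LinearMap.zero_apply] at h1
    exact zero_ne_one h1
  exact .of_equiv (LinearEquiv.toSpanNonzeroSingleton O _ _ hg)

section IsDedekindDomain

variable [IsDedekindDomain O]

open UniqueFactorizationMonoid in
theorem Ideal.exists_sup_span_singleton_add_mul_eq_top {J : Ideal O} (hJ : J ≠ ⊥) {x y : O}
    (h : J ⊔ Ideal.span {x, y} = ⊤) : ∃ s, J ⊔ Ideal.span {x + s * y} = ⊤ := by
  classical
  -- CRT: `s ≡ 1` modulo the primes over `J` containing `x`, `s ≡ 0` modulo the others
  obtain ⟨s, hs⟩ := IsDedekindDomain.exists_forall_sub_mem_ideal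
    (s := (normalizedFactors J).toFinset) (fun P => P) (fun _ => 1)
    (fun P hP => prime_of_normalized_factor P (Multiset.mem_toFinset.mp hP))
    (fun _ _ _ _ => id) (fun P => if x ∈ P.1 then 1 else 0)
  refine ⟨s, by_contra fun hne => ?_⟩
  obtain ⟨M, hM, hle⟩ := Ideal.exists_le_maximal _ hne
  have hJM : J ≤ M := le_sup_left.trans hle
  have hxsy : x + s * y ∈ M := hle (Ideal.mem_sup_right (Ideal.mem_span_singleton_self _))
  have hMJ : M ∈ normalizedFactors J := (Ideal.mem_normalizedFactors_iff hJ).2 ⟨hM.isPrime, hJM⟩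
  have hsM := hs M (Multiset.mem_toFinset.2 hMJ)
  rw [pow_one] at hsM
  by_cases hx : x ∈ M
  · rw [if_pos hx] at hsM
    have hs : s ∉ M := fun hs =>
      hM.ne_top ((Ideal.eq_top_iff_one _).2 (by simpa using M.sub_mem hs hsM))
    have hy : y ∈ M :=
      (hM.isPrime.mem_or_mem (by simpa using M.sub_mem hxsy hx)).resolve_left hs
    refine hM.ne_top (top_unique (h ▸ sup_le hJM ?_))
    rw [Ideal.span_le, Set.insert_subset_iff, Set.singleton_subset_iff]
    exact ⟨hx, hy⟩
  · rw [if_neg hx, sub_zero] at hsM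
    exact hx (by simpa using M.sub_mem hxsy (M.mul_mem_right y hsM))

theorem exists_surjective_comp_id_prod {M : Type*} [AddCommGroup M] [Module O M]
    {γ₀ : M →ₗ[O] O} (hγ₀ : γ₀ ≠ 0) (φ : (M × O) × O →ₗ[O] O) (hφ : Function.Surjective φ) :
    ∃ t : M × O →ₗ[O] O, Function.Surjective (φ ∘ₗ id.prod t) := by
  set α := φ ∘ₗ inl O (M × O) O ∘ₗ inl O M O
  set x := φ ((0, 1), 0)
  set y := φ (0, 1)
  have hφ_apply (m : M) (c d : O) : φ ((m, c), d) = α m + c * x + d * y := by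
    rw [show ((m, c), d) = (((m, 0), 0) + c • ((0, 1), 0) + d • (0, 1) : (M × O) × O) by simp,
      map_add, map_add, map_smul, map_smul]
    rfl
  by_cases hy : y = 0
  · refine ⟨0, fun a => ?_⟩
    obtain ⟨⟨⟨m, c⟩, d⟩, rfl⟩ := hφ a
    exact ⟨(m, c), by simp [hφ_apply, hy]⟩
  -- `γ` only serves to make `J` nonzero
  obtain ⟨γ, hγ⟩ : ∃ γ : M →ₗ[O] O, α + y • γ ≠ 0 := by
    by_cases hα : α = 0
    · exact ⟨γ₀, by rwa [hα, zero_add, Ne, smul_eq_zero, not_or, and_iff_right hy]⟩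
    · exact ⟨0, by rwa [smul_zero, add_zero]⟩
  set J := range (α + y • γ)
  have hJ : J ≠ ⊥ := by rwa [Ne, range_eq_bot]
  have hJxy : J ⊔ Ideal.span {x, y} = ⊤ := by
    refine eq_top_iff.2 fun a _ => ?_
    obtain ⟨⟨⟨m, c⟩, d⟩, rfl⟩ := hφ a
    have : φ ((m, c), d) = (α + y • γ) m + (c * x + (d - γ m) * y) := by
      rw [hφ_apply, LinearMap.add_apply, LinearMap.smul_apply, smul_eq_mul]; ring
    rw [this]
    exact Submodule.add_mem_sup (mem_range_self _ m) (Ideal.add_mem _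
      (Ideal.mul_mem_left _ _ (Ideal.subset_span (by simp)))
      (Ideal.mul_mem_left _ _ (Ideal.subset_span (by simp))))
  obtain ⟨s, hs⟩ := Ideal.exists_sup_span_singleton_add_mul_eq_top hJ hJxy
  let t := γ ∘ₗ fst O M O + s • snd O M O
  have ht (m : M) (c : O) : (φ ∘ₗ id.prod t) (m, c) = (α + y • γ) m + c * (x + s * y) := by
    change φ ((m, c), γ m + s * c) = _
    rw [hφ_apply, LinearMap.add_apply, LinearMap.smul_apply, smul_eq_mul]; ring
  refine ⟨t, range_eq_top.1 (eq_top_iff.2 (hs ▸ sup_le ?_ ?_))⟩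
  · rintro _ ⟨m, rfl⟩
    exact ⟨(m, 0), by rw [ht, zero_mul, add_zero]⟩
  · rw [Ideal.span_singleton_le_iff_mem]
    exact ⟨(0, 1), by rw [ht, map_zero, zero_add, one_mul]⟩

theorem free_ker_prod_of_forall_free_ker {M : Type*} [AddCommGroup M] [Module O M]
    {γ₀ : M →ₗ[O] O} (hγ₀ : γ₀ ≠ 0) (φ : (M × O) × O →ₗ[O] O) (hφ : Function.Surjective φ)
    (h : ∀ ψ : M × O →ₗ[O] O, Function.Surjective ψ → Module.Free O (ker ψ)) :
    Module.Free O (ker φ) := by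
  obtain ⟨t, ht⟩ := exists_surjective_comp_id_prod hγ₀ φ hφ
  obtain ⟨u, hu⟩ := ht (φ (0, 1))
  have := h _ ht
  refine .of_equiv (kerEquivKerCompProd φ t (toSpanSingleton O _ u) fun q => ?_).symm
  have hu : φ (u, t u) = φ (0, 1) := hu
  rw [toSpanSingleton_apply, map_smul, ← Prod.smul_mk, map_smul, hu, ← map_smul, Prod.smul_mk,
    smul_zero, smul_eq_mul, mul_one]

theorem free_ker_of_surjective {N : Type*} [AddCommGroup N] [Module O N] [Module.Free O N]
    [Module.Finite O N] (φ : N →ₗ[O] O) (hφ : Function.Surjective φ) :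
    Module.Free O (ker φ) := by
  suffices key : ∀ (r : ℕ) (φ : (Fin r → O) →ₗ[O] O), Function.Surjective φ →
      Module.Free O (ker φ) by
    let e := LinearEquiv.ofFinrankEq (R := O) N (Fin (Module.finrank O N) → O) (by simp)
    have := key _ (φ ∘ₗ e.symm.toLinearMap) (hφ.comp e.symm.surjective)
    exact .of_equiv (kerCompEquiv φ e.symm)
  intro r
  induction r using Nat.strong_induction_on with
  | _ r ih =>
  intro φ hφ
  match r, ih with
  | 0, _ => infer_instance
  | 1, _ =>
    let e := LinearEquiv.ofFinrankEq (R := O) (Fin 1 → O) O (by simp)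
    have : Function.Injective φ := by
      simpa using (OrzechProperty.injective_of_surjective_endomorphism (φ ∘ₗ e.symm.toLinearMap)
        (hφ.comp e.symm.surjective)).comp e.injective
    rw [ker_eq_bot.2 this]
    infer_instance
  | 2, _ =>
    let e := LinearEquiv.ofFinrankEq (R := O) (Fin 2 → O) (O × O) (by simp)
    have := free_ker_of_surjective_prod (φ ∘ₗ e.symm.toLinearMap) (hφ.comp e.symm.surjective)
    exact .of_equiv (kerCompEquiv φ e.symm)
  | r + 3, ih =>
    let e := LinearEquiv.ofFinrankEq (R := O) (Fin (r + 3) → O) (((Fin (r + 1) → O) × O) × O)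
      (by simp)
    have := free_ker_prod_of_forall_free_ker (γ₀ := proj 0)
      (fun h => by simpa using LinearMap.congr_fun h (Pi.single 0 1)) (φ ∘ₗ e.symm.toLinearMap)
      (hφ.comp e.symm.surjective) fun ψ hψ => by
        let e' := LinearEquiv.ofFinrankEq (R := O) (Fin (r + 2) → O) ((Fin (r + 1) → O) × O)
          (by simp)
        have := ih (r + 2) (by omega) (ψ ∘ₗ e'.toLinearMap) (hψ.comp e'.surjective)
        exact .of_equiv (kerCompEquiv ψ e')
    exact .of_equiv (kerCompEquiv φ e.symm)

theorem free_of_free_prod_self {P : Type*} [AddCommGroup P] [Module O P] [Module.Finite O P]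
    [Module.Free O (P × O)] : Module.Free O P := by
  have := free_ker_of_surjective (snd O P O) snd_surjective
  exact .of_equiv ((LinearEquiv.ofInjective _ inl_injective).trans
    (LinearEquiv.ofEq _ _ (range_inl O P O))).symm

theorem free_of_free_prod {P Q : Type*} [AddCommGroup P] [Module O P] [Module.Finite O P]
    [AddCommGroup Q] [Module O Q] [Module.Free O Q] [Module.Finite O Q]
    [Module.Free O (P × Q)] : Module.Free O P := by
  suffices key : ∀ m, Module.Free O (P × (Fin m → O)) → Module.Free O P from
    key _ (.of_equiv ((LinearEquiv.refl O P).prodCongr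
      (LinearEquiv.ofFinrankEq (R := O) Q (Fin (Module.finrank O Q) → O) (by simp))))
  intro m
  induction m with
  | zero => exact fun _ => .of_equiv (LinearEquiv.prodUnique (R := O) (M₂ := Fin 0 → O))
  | succ m ih =>
    intro _
    have : Module.Free O ((P × (Fin m → O)) × O) := .of_equiv
      ((LinearEquiv.refl O P).prodCongr (LinearEquiv.ofFinrankEq (R := O) (Fin (m + 1) → O)
        ((Fin m → O) × O) (by simp)) ≪≫ₗ (LinearEquiv.prodAssoc O P (Fin m → O) O).symm)
    exact ih free_of_free_prod_self

theorem exists_basis_extending_iff {ι κ N : Type*} [Finite ι] [Finite κ] [AddCommGroup N]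
    [Module O N] (b₀ : Module.Basis ι O N) (v : κ → N) :
    (∃ (b : Module.Basis ι O N) (e : κ ↪ ι), ∀ i, b (e i) = v i) ↔
      LinearIndependent O v ∧ ∃ W, IsCompl (Submodule.span O (Set.range v)) W := by
  constructor
  · rintro ⟨b, e, hb⟩
    have hv : v = b ∘ e := funext fun i => (hb i).symm
    refine ⟨hv ▸ b.linearIndependent.comp e e.injective, Submodule.span O (b '' (Set.range e)ᶜ),
      ?_⟩
    rw [hv, Set.range_comp]
    exact b.linearIndependent.isCompl_span_image b.span_eq isCompl_compl
  · rintro ⟨hv, W, hW⟩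
    have : Module.Free O N := .of_basis b₀
    have : Module.Finite O N := .of_basis b₀
    have : Module.Free O (W × (κ → O)) := .of_equiv
      ((LinearEquiv.refl O W).prodCongr (Module.Basis.span hv).equivFun.symm ≪≫ₗ
        LinearEquiv.prodComm O W _ ≪≫ₗ Submodule.prodEquivOfIsCompl _ _ hW).symm
    have : Module.Free O W := free_of_free_prod (Q := κ → O)
    let B := ((Module.Basis.span hv).prod (Module.Free.chooseBasis O W)).map
      (Submodule.prodEquivOfIsCompl _ _ hW)
    let e := (b₀.indexEquiv B).symm
    refine ⟨B.reindex e, Function.Embedding.inl.trans e.toEmbedding, fun i => ?_⟩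
    simp [B, Module.Basis.span_apply]

end IsDedekindDomain

theorem finrank_span_image_algebraMap_eq_card_iff (K : Type*) [Field K] [Algebra O K]
    [IsFractionRing O K] {ι κ : Type*} [Fintype κ] (v : κ → ι → O) :
    Module.finrank K (Submodule.span K ((fun (x : ι → O) (j : ι) => algebraMap O K (x j)) ''
        (Submodule.span O (Set.range v) : Set (ι → O)))) = Fintype.card κ ↔
      LinearIndependent O v := by
  let f : (ι → O) →ₗ[O] (ι → K) := (Algebra.linearMap O K).compLeft ι
  have hf : ker f = ⊥ := ker_eq_bot.2 (IsFractionRing.injective O K).comp_left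
  change Module.finrank K (Submodule.span K (f '' _)) = _ ↔ _
  rw [← Submodule.map_coe, Submodule.map_span, Submodule.span_span_of_tower, ← Set.range_comp,
    eq_comm, ← f.linearIndependent_iff hf, LinearIndependent.iff_fractionRing O K]
  exact linearIndependent_iff_card_eq_finrank_span.symm

end

theorem extends_to_basis_iff_span_summand_rank_general
    (O : Type) [CommRing O] [IsDedekindDomain O]
    (K : Type) [Field K] [Algebra O K] [IsFractionRing O K]
    (n k : ℕ) (v : Fin k → (Fin n → O)) :
    (∃ (b : Module.Basis (Fin n) O (Fin n → O)) (ι : Fin k ↪ Fin n), ∀ i, b (ι i) = v i) ↔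
      ((∃ W : Submodule O (Fin n → O), IsCompl (Submodule.span O (Set.range v)) W) ∧
        Module.finrank K (Submodule.span K
          ((fun (x : Fin n → O) (j : Fin n) => algebraMap O K (x j)) ''
            ((Submodule.span O (Set.range v)) : Set (Fin n → O)))) = k) := by
  have hrank := finrank_span_image_algebraMap_eq_card_iff K v
  rw [Fintype.card_fin] at hrank
  rw [hrank, and_comm, exists_basis_extending_iff (Pi.basisFun O (Fin n))]

/-- **Lemma.**  Let `O` be a Dedekind domain with fraction field `K` and `n ≥ 1`.  A family
`v₁, …, v_k` of elements of `O^n` extends to a basis of `O^n` if and only if its `O`-span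
is a direct summand of `O^n` of rank `k`, i.e. the `K`-dimension of the `K`-span of its
image in `K^n` equals `k`. -/
theorem extends_to_basis_iff_span_summand_rank
    (O : Type) [CommRing O] [IsDomain O] [IsDedekindDomain O]
    (K : Type) [Field K] [Algebra O K] [IsFractionRing O K]
    (n k : ℕ) (hn : 1 ≤ n) (v : Fin k → (Fin n → O)) :
    (∃ (b : Module.Basis (Fin n) O (Fin n → O)) (ι : Fin k ↪ Fin n), ∀ i, b (ι i) = v i) ↔
      ((∃ W : Submodule O (Fin n → O), IsCompl (Submodule.span O (Set.range v)) W) ∧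
        Module.finrank K (Submodule.span K
          ((fun (x : Fin n → O) (j : Fin n) => algebraMap O K (x j)) ''
            ((Submodule.span O (Set.range v)) : Set (Fin n → O)))) = k) :=
  extends_to_basis_iff_span_summand_rank_general O K n k v
end

section
/- Let O be a Dedekind domain, n ≥ 3, L : O^n → O a surjective O-linear map, and I ⊆ O an ideal. Let v₁, …, v_{n−1} be a partial I-basis of O^n, let v = v_j be one of these vectors with L(v) ≠ 0, and let I_σ be the ideal of O generated by L(v₁), …, L(v_{n−1}). If I_σ is not contained in I, assume additionally that L(v) − 1 ∈ I. Then there exists w ∈ O^n such that v₁, …, v_{n−1}, w is an I-basis of O^n and the ideal of O generated by L(v) and L(w) is all of O. -/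
/-! Write the partial `I`-basis as a basis `b` minus one vector `b j'`. As `L` is surjective,
`s = L (b j')` and `I_σ = (L v₁, …, L v_{n-1})` generate `O`, say `x s + g = 1`, `g ∈ I_σ`.
Only finitely many maximal ideals contain `a = L v ≠ 0`, so the Chinese remainder theorem
gives `c` with `r = s + c g` coprime to `a`. If `I_σ ⊆ I` then `r ≡ s mod I`; otherwise
`a ≡ 1 mod I` and `r (1 - a)`, still coprime to `a`, lies in `I`. Lifting `r - s ∈ I_σ` to
`y` in the span of the `vᵢ`, the transvection `b j' ↦ b j' + y` gives the basis completed by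
`w = b j' + y`.
-/

theorem isCoprime_of_forall_isMaximal {R : Type*} [CommRing R] {x y : R}
    (h : ∀ m : Ideal R, m.IsMaximal → x ∈ m → y ∉ m) : IsCoprime x y := by
  rw [← Ideal.sup_eq_top_iff_isCoprime]
  by_contra hne
  obtain ⟨m, hm, hle⟩ := Ideal.exists_le_maximal _ hne
  exact h m hm (hle (Ideal.mem_sup_left (Ideal.mem_span_singleton_self x)))
    (hle (Ideal.mem_sup_right (Ideal.mem_span_singleton_self y)))

theorem exists_isCoprime_add_mul {R : Type*} [CommRing R] {a s g : R}
    (hfin : {m : Ideal R | m.IsMaximal ∧ a ∈ m}.Finite) (hsg : IsCoprime s g) :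
    ∃ c, IsCoprime a (s + c * g) := by
  classical
  have := hfin.to_subtype
  -- `c ≡ 1` at the maximal ideals containing `s` (which miss `g`), `c ≡ 0` at the others
  obtain ⟨c, hc⟩ := Ideal.exists_forall_sub_mem_ideal
    (I := fun m : {m : Ideal R | m.IsMaximal ∧ a ∈ m} ↦ (m : Ideal R))
    (fun m m' hne ↦ have := m.2.1; have := m'.2.1; Ideal.isCoprime_of_isMaximal
      (Subtype.coe_ne_coe.mpr hne))
    (fun m ↦ if s ∈ (m : Ideal R) then 1 else 0)
  refine ⟨c, isCoprime_of_forall_isMaximal fun m hm ham hmem ↦ ?_⟩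
  have hcm := hc ⟨m, hm, ham⟩
  by_cases hs : s ∈ m
  · simp only [hs, if_true] at hcm
    refine hm.isPrime.notMem_of_isCoprime_of_mem hsg hs ?_
    have : s + c * g - (s + (c - 1) * g) ∈ m :=
      m.sub_mem hmem (m.add_mem hs (m.mul_mem_right g hcm))
    rwa [show s + c * g - (s + (c - 1) * g) = g by ring] at this
  · simp only [hs, if_false, sub_zero] at hcm
    exact hs (by simpa using m.sub_mem hmem (m.mul_mem_right g hcm))

theorem IsDedekindDomain.finite_setOf_isMaximal_mem {R : Type*} [CommRing R]
    [IsDedekindDomain R] {a : R} (ha : a ≠ 0) :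
    {m : Ideal R | m.IsMaximal ∧ a ∈ m}.Finite := by
  refine ((Ideal.finite_factors (I := Ideal.span {a}) (by simpa using ha)).image
    (·.asIdeal)).subset ?_
  rintro m ⟨hm, ham⟩
  refine ⟨⟨m, hm.isPrime, ?_⟩, ?_, rfl⟩
  · rintro rfl; exact ha (by simpa using ham)
  · simpa [Ideal.dvd_iff_le, Ideal.span_le] using ham
theorem IsDedekindDomain.exists_sub_mem_isCoprime {R : Type*} [CommRing R]
    [IsDedekindDomain R] {J : Ideal R} {a s : R} (ha : a ≠ 0) (hsJ : Ideal.span {s} ⊔ J = ⊤) :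
    ∃ u, u - s ∈ J ∧ IsCoprime a u := by
  obtain ⟨x, g, hgJ, hxg⟩ :=
    Ideal.mem_span_singleton_sup.mp (hsJ ▸ Submodule.mem_top (x := 1))
  obtain ⟨c, hc⟩ := exists_isCoprime_add_mul (finite_setOf_isMaximal_mem ha)
    (⟨x, 1, by rw [one_mul]; exact hxg⟩ : IsCoprime s g)
  exact ⟨s + c * g, by simpa using J.mul_mem_left c hgJ, hc⟩

theorem IsDedekindDomain.exists_sub_mem_isCoprime_mem_or_sub_one_mem {R : Type*}
    [CommRing R] [IsDedekindDomain R] {I J : Ideal R} {a s : R} (ha : a ≠ 0) (haJ : a ∈ J)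
    (hsJ : Ideal.span {s} ⊔ J = ⊤) (hs : s ∈ I ∨ s - 1 ∈ I)
    (hJI : J ≤ I ∨ a - 1 ∈ I) :
    ∃ r, r - s ∈ J ∧ IsCoprime a r ∧ (r ∈ I ∨ r - 1 ∈ I) := by
  obtain ⟨u, huJ, hau⟩ := exists_sub_mem_isCoprime ha hsJ
  rcases hJI with hJI | haI
  · refine ⟨u, huJ, hau, ?_⟩
    have hus : u - s ∈ I := hJI huJ
    rcases hs with hs | hs
    · exact .inl (by simpa using I.add_mem hus hs)
    · exact .inr (by simpa using I.add_mem hus hs)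
  · refine ⟨u + (-u) * a, ?_, hau.add_mul_right_right _, .inl ?_⟩
    · simpa [add_sub_right_comm] using J.add_mem huJ (J.mul_mem_left (-u) haJ)
    · simpa [mul_sub, add_comm] using I.mul_mem_left (-u) haI

theorem Function.Embedding.exists_compl_range_eq_singleton {α β : Type*} [Finite β]
    (ι : α ↪ β) (h : Nat.card β = Nat.card α + 1) : ∃ j, (Set.range ι)ᶜ = {j} :=
  Set.ncard_eq_one.mp <| Set.ncard_compl_of_ncard_eq_add _ <| by
    rw [Set.ncard_range_of_injective ι.injective, h, add_comm]

theorem Module.Basis.exists_update_add {ι R M : Type*} [DecidableEq ι] [Ring R] [AddCommGroup M]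
    [Module R M] (b : Module.Basis ι R M) {i : ι} {y : M}
    (hy : y ∈ Submodule.span R (b '' {i}ᶜ)) :
    ∃ b' : Module.Basis ι R M, ⇑b' = Function.update b i (b i + y) := by
  have hcoord : b.coord i y = 0 := by
    refine (Submodule.span_le (p := LinearMap.ker (b.coord i))).mpr ?_ hy
    rintro _ ⟨k, hk, rfl⟩
    simp [Finsupp.single_eq_of_ne (Ne.symm hk)]
  refine ⟨b.map (LinearEquiv.transvection hcoord), funext fun k ↦ ?_⟩
  rcases eq_or_ne k i with rfl | hk
  · simp [LinearMap.transvection.apply]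
  · simp [LinearMap.transvection.apply, hk]

theorem Ideal.span_image_eq_top_of_surjective {R M : Type*} [CommRing R] [AddCommGroup M]
    [Module R M] {L : M →ₗ[R] R} (hL : Function.Surjective L) {s : Set M}
    (hs : Submodule.span R s = ⊤) : Ideal.span (L '' s) = ⊤ := by
  rw [Ideal.span, ← Submodule.map_span, hs, Submodule.map_top, LinearMap.range_eq_top.mpr hL]

theorem exists_completing_vector_general
    (O : Type) [CommRing O] [IsDedekindDomain O]
    (n : ℕ)
    (L : (Fin n → O) →ₗ[O] O) (hL : Function.Surjective L)
    (I : Ideal O)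
    (v : Fin (n - 1) → (Fin n → O))
    (hpartial : ∃ (b : Module.Basis (Fin n) O (Fin n → O)) (ι : Fin (n - 1) ↪ Fin n),
      (∀ i, b (ι i) = v i) ∧ ∀ m, L (b m) ∈ I ∨ L (b m) - 1 ∈ I)
    (j : Fin (n - 1)) (hvj : L (v j) ≠ 0)
    (hcase : ¬ (Ideal.span (Set.range fun i => L (v i)) ≤ I) → L (v j) - 1 ∈ I) :
    ∃ w : Fin n → O,
      Ideal.span {L (v j), L w} = ⊤ ∧
      ∃ (b : Module.Basis (Fin n) O (Fin n → O)) (ι : Fin (n - 1) ↪ Fin n) (j' : Fin n),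
        (∀ i, b (ι i) = v i) ∧ b j' = w ∧ (∀ i, j' ≠ ι i) ∧
        ∀ m, L (b m) ∈ I ∨ L (b m) - 1 ∈ I := by
  obtain ⟨b, ι, hbv, hbI⟩ := hpartial
  obtain ⟨j', hj'⟩ := ι.exists_compl_range_eq_singleton (by
    have := j.pos
    simp only [Nat.card_eq_fintype_card, Fintype.card_fin]
    omega)
  have hj'ι (i : Fin (n - 1)) : j' ≠ ι i := by
    rintro rfl
    exact hj'.ge (Set.mem_singleton _) ⟨i, rfl⟩
  have hv : Set.range v = b '' {j'}ᶜ := by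
    rw [← hj', compl_compl, ← Set.range_comp]
    exact congrArg Set.range (funext hbv).symm
  have hrange : Set.range b = insert (b j') (Set.range v) := by
    rw [hv, ← Set.image_insert_eq, Set.insert_eq, Set.union_compl_self, Set.image_univ]
  have hLv : (Set.range fun i ↦ L (v i)) = L '' Set.range v := Set.range_comp L v
  have hsJ : Ideal.span {L (b j')} ⊔ Ideal.span (Set.range fun i ↦ L (v i)) = ⊤ := by
    rw [← Ideal.span_image_eq_top_of_surjective hL b.span_eq, hrange, Set.image_insert_eq,
      Ideal.span_insert, hLv]
  obtain ⟨r, hrJ, hcop, hrI⟩ := IsDedekindDomain.exists_sub_mem_isCoprime_mem_or_sub_one_mem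
    hvj (Ideal.subset_span (Set.mem_range_self j)) hsJ (hbI j') (or_iff_not_imp_left.mpr hcase)
  obtain ⟨y, hy, hLy⟩ : ∃ y ∈ Submodule.span O (Set.range v), L y = r - L (b j') := by
    rwa [hLv, Ideal.span, ← Submodule.map_span] at hrJ
  obtain ⟨b', hb'⟩ := b.exists_update_add (hv ▸ hy)
  refine ⟨b j' + y, ?_, b', ι, j', fun i ↦ ?_, by simp [hb'], hj'ι, fun m ↦ ?_⟩
  · rwa [Ideal.span_insert, Ideal.sup_eq_top_iff_isCoprime, map_add, hLy, add_sub_cancel]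
  · simp [hb', (hj'ι i).symm, hbv]
  · rcases eq_or_ne m j' with rfl | hm
    · simpa [hb', hLy] using hrI
    · simpa [hb', hm] using hbI m

/-- **Lemma (completing a partial `I`-basis well).**  Let `O` be a Dedekind domain, `n ≥ 3`,
`L : O^n → O` a surjective linear map and `I ⊆ O` an ideal.  Let `v₁, …, v_{n-1}` be a
partial `I`-basis of `O^n`, let `v = v_j` satisfy `L v ≠ 0`, and if the ideal `I_σ`
generated by `L v₁, …, L v_{n-1}` is not contained in `I` assume moreover `L v ≡ 1 mod I`.
Then there is `w` such that `v₁, …, v_{n-1}, w` is an `I`-basis of `O^n` and the ideal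
generated by `L v` and `L w` is all of `O`. -/
theorem exists_completing_vector
    (O : Type) [CommRing O] [IsDomain O] [IsDedekindDomain O]
    (n : ℕ) (hn : 3 ≤ n)
    (L : (Fin n → O) →ₗ[O] O) (hL : Function.Surjective L)
    (I : Ideal O)
    (v : Fin (n - 1) → (Fin n → O))
    (hpartial : ∃ (b : Module.Basis (Fin n) O (Fin n → O)) (ι : Fin (n - 1) ↪ Fin n),
      (∀ i, b (ι i) = v i) ∧ ∀ m, L (b m) ∈ I ∨ L (b m) - 1 ∈ I)
    (j : Fin (n - 1)) (hvj : L (v j) ≠ 0)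
    (hcase : ¬ (Ideal.span (Set.range fun i => L (v i)) ≤ I) → L (v j) - 1 ∈ I) :
    ∃ w : Fin n → O,
      Ideal.span {L (v j), L w} = ⊤ ∧
      ∃ (b : Module.Basis (Fin n) O (Fin n → O)) (ι : Fin (n - 1) ↪ Fin n) (j' : Fin n),
        (∀ i, b (ι i) = v i) ∧ b j' = w ∧ (∀ i, j' ≠ ι i) ∧
        ∀ m, L (b m) ∈ I ∨ L (b m) - 1 ∈ I :=
  exists_completing_vector_general O n L hL I v hpartial j hvj hcase
end

section
/- Let O be a Dedekind domain, L : O^n → O a surjective O-linear map, and I ⊆ O an ideal. Let σ = {v₁, …, v_{k+1}} be a family extending to a basis of O^n with k + 1 < n, and assume that for each i either L(v_i) ∈ I or L(v_i) − 1 ∈ I. Then the following are equivalent: (i) there is a good basis of O^n containing v₁, …, v_{k+1}; (ii) there is a good I-basis v₁, …, v_n of O^n extending σ with L(v_i) = 1 for all i ≥ k + 2; (iii) there exists a submodule W of O^n with V_σ ⊕ W = O^n and L(W) = O. -/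
/-!
A Dedekind domain has stable range at most `2`: if `(a₀, …, aᵣ)` is unimodular with `r ≥ 2`,
adding suitable multiples of `aᵣ` to the other entries leaves a unimodular row of length `r`
(the Chinese remainder theorem at the finitely many primes containing a nonzero ideal).
Consequently a free module of finite rank with a surjective functional `ℓ` has a basis containing a
vector `e` with `ℓ e = 1`: transvections shrink the unimodular row of values down to length two,
where a determinant-one change of basis finishes.
The complement `W` in (iii) is isomorphic to `O^n / V_σ`, hence free, so it has such a basis; joined
with `σ` it gives (i). Conversely, a good vector lets one shear every vector outside `σ` to
`L`-value `1`, which gives (ii), and the span of those vectors is a complement as in (iii).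
-/

open Module Submodule Set

theorem Ideal.exists_add_mul_sup_eq_top {O : Type*} [CommRing O] [IsDedekindDomain O]
    {J : Ideal O} (hJ : J ≠ ⊥) {a b : O} (h : Ideal.span {a, b} ⊔ J = ⊤) :
    ∃ t, Ideal.span {a + t * b} ⊔ J = ⊤ := by
  classical
  have hfin := Ideal.finite_factors hJ
  obtain ⟨t, ht⟩ := IsDedekindDomain.exists_forall_sub_mem_ideal (s := hfin.toFinset)
    (fun v => v.asIdeal) (fun _ => 1) (fun v _ => v.prime)
    (fun v _ w _ hvw h => hvw (IsDedekindDomain.HeightOneSpectrum.ext h))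
    (fun v => if a ∈ v.1.asIdeal then 1 else 0)
  refine ⟨t, ?_⟩
  by_contra hne
  obtain ⟨m, hm, hle⟩ := Ideal.exists_le_maximal _ hne
  have hJm : J ≤ m := le_sup_right.trans hle
  have hab : a + t * b ∈ m := hle (Ideal.mem_sup_left (Ideal.mem_span_singleton_self _))
  have htm := ht ⟨m, hm.isPrime, ne_bot_of_le_ne_bot hJ hJm⟩ (by simpa [Ideal.dvd_iff_le])
  simp only [pow_one] at htm
  -- `t ≡ 1` at the primes containing `a`, and `t ≡ 0` at the others
  have ha : a ∈ m := by
    split_ifs at htm with ha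
    · exact ha
    · convert m.sub_mem hab (m.mul_mem_right b (by simpa using htm)) using 1; ring
  have hb : b ∈ m := by
    split_ifs at htm
    convert m.sub_mem (m.sub_mem hab ha) (m.mul_mem_right b htm) using 1; ring
  refine hm.ne_top (top_le_iff.mp (h ▸ sup_le ?_ hJm))
  exact Ideal.span_le.mpr (by simp [insert_subset_iff, ha, hb])

theorem Ideal.exists_span_range_add_mul_eq_top {O ι : Type*} [CommRing O] [IsDedekindDomain O]
    {a : ι → O} (ha : Ideal.span (range a) = ⊤) {s i j : ι} (his : i ≠ s)
    (hjs : j ≠ s) (hij : i ≠ j) :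
    ∃ t : ι → O, t s = 0 ∧ Ideal.span (range fun k : ({s}ᶜ : Set ι) => a k + t k * a s) = ⊤ := by
  classical
  set J := Ideal.span (a '' {i, s}ᶜ)
  have hsplit : Ideal.span {a i, a s} ⊔ J = ⊤ := by
    refine top_le_iff.mp (ha ▸ Ideal.span_le.mpr ?_)
    rintro _ ⟨k, rfl⟩
    by_cases hk : k ∈ ({i, s} : Set ι)
    · obtain rfl | rfl := hk <;> exact Ideal.mem_sup_left (Ideal.subset_span (by simp))
    · exact Ideal.mem_sup_right (Ideal.subset_span ⟨k, hk, rfl⟩)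
  have hmem (t : ι → O) (k : ι) (hk : k ≠ s) :
      a k + t k * a s ∈ Ideal.span (range fun k : ({s}ᶜ : Set ι) => a k + t k * a s) :=
    Ideal.subset_span ⟨⟨k, hk⟩, rfl⟩
  by_cases hJ : J = ⊥
  · -- here `a j = 0`; shifting it to `y * a s`, where `x * a i + y * a s = 1`, gives unimodularity
    have hpair : Ideal.span {a i, a s} = ⊤ := by simpa [hJ] using hsplit
    obtain ⟨x, y, hxy⟩ := Ideal.mem_span_pair.mp (hpair ▸ mem_top : (1 : O) ∈ _)
    have haj : a j ∈ J := Ideal.subset_span ⟨j, by simp [hij.symm, hjs], rfl⟩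
    rw [hJ, Ideal.mem_bot] at haj
    refine ⟨Pi.single j y, by simp [hjs.symm], (Ideal.eq_top_iff_one _).mpr ?_⟩
    have := Ideal.add_mem _ (Ideal.mul_mem_left _ x (hmem (Pi.single j y) i his)) (hmem _ j hjs)
    rw [← hxy]
    simpa [hij, haj] using this
  · obtain ⟨t, ht⟩ := Ideal.exists_add_mul_sup_eq_top hJ hsplit
    refine ⟨Pi.single i t, by simp [his.symm], top_le_iff.mp (ht ▸ sup_le ?_ ?_)⟩
    · simpa using hmem (Pi.single i t) i his
    · refine Ideal.span_le.mpr ?_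
      rintro _ ⟨k, hk, rfl⟩
      simp only [mem_compl_iff, mem_insert_iff, mem_singleton_iff, not_or] at hk
      simpa [hk.1] using hmem (Pi.single i t) k hk.2

namespace Module.Basis

section Ring

variable {R M ι : Type*} [Ring R] [AddCommGroup M] [Module R M]

noncomputable def spanImage (b : Basis ι R M) (s : Set ι) : Basis s R (span R (b '' s)) :=
  (Basis.span (b.linearIndependent.comp ((↑) : s → ι) Subtype.val_injective)).map
    (LinearEquiv.ofEq _ _ (by rw [range_comp, Subtype.range_coe]))

@[simp]
theorem spanImage_apply (b : Basis ι R M) (s : Set ι) (i : s) : (b.spanImage s i : M) = b i := by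
  simp [spanImage, Basis.span_apply]

theorem isCompl_span_image_compl (b : Basis ι R M) (s : Set ι) :
    IsCompl (span R (b '' s)) (span R (b '' sᶜ)) :=
  b.linearIndependent.isCompl_span_image b.span_eq isCompl_compl

theorem nonempty_basis_of_isCompl (b : Basis ι R M) (s : Set ι) {W : Submodule R M}
    (hW : IsCompl (span R (b '' s)) W) : Nonempty (Basis ↥sᶜ R W) :=
  ⟨(b.spanImage sᶜ).map ((quotientEquivOfIsCompl _ _ (b.isCompl_span_image_compl s)).symm ≪≫ₗ
    quotientEquivOfIsCompl _ _ hW)⟩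

theorem exists_eqOn_of_isCompl (b : Basis ι R M) (s : Set ι) {W : Submodule R M}
    (hW : IsCompl (span R (b '' s)) W) (c : Basis ↥sᶜ R W) :
    ∃ b' : Basis ι R M, (∀ i ∈ s, b' i = b i) ∧ ∀ j : ↥sᶜ, b' j = c j := by
  classical
  refine ⟨(((b.spanImage s).prod c).map (prodEquivOfIsCompl _ _ hW)).reindex
    (Equiv.Set.sumCompl s), fun i hi => ?_, fun j => ?_⟩
  · simp [Equiv.Set.sumCompl_symm_apply_of_mem hi]
  · simp [Equiv.Set.sumCompl_symm_apply_compl]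

theorem exists_apply_eq_one_of_isUnit (b : Basis ι R M) (ℓ : M →ₗ[R] R) {i : ι}
    (hi : IsUnit (ℓ (b i))) : ∃ c : Basis ι R M, ℓ (c i) = 1 := by
  obtain ⟨u, hu⟩ := hi
  exact ⟨b.unitsSMul fun _ => u⁻¹, by simp [Basis.unitsSMul_apply, Units.smul_def, ← hu]⟩

theorem span_range_apply (b : Basis ι R M) (ℓ : M →ₗ[R] R) :
    Ideal.span (range fun i => ℓ (b i)) = LinearMap.range ℓ := by
  rw [LinearMap.range_eq_map, ← b.span_eq, Submodule.map_span, ← range_comp]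
  rfl

theorem exists_add_smul (b : Basis ι R M) {i₀ : ι} {c : ι → R} (hc : c i₀ = 0) :
    ∃ b' : Basis ι R M, ∀ i, b' i = b i + c i • b i₀ :=
  ⟨b.map (LinearEquiv.transvection (f := b.constr ℕ c) (v := b i₀) (by simpa using hc)),
    fun i => by simp [LinearMap.transvection.apply]⟩

theorem exists_eqOn_apply_eq_one (b : Basis ι R M) (ℓ : M →ₗ[R] R) {i₀ : ι}
    (hi₀ : ℓ (b i₀) = 1) (s : Set ι) :
    ∃ b' : Basis ι R M, (∀ i ∈ s, b' i = b i) ∧ ∀ i ∉ s, ℓ (b' i) = 1 := by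
  classical
  obtain ⟨b', hb'⟩ := b.exists_add_smul (i₀ := i₀)
    (c := fun i => if i ∈ s then 0 else 1 - ℓ (b i)) (by split_ifs <;> simp [hi₀])
  refine ⟨b', fun i hi => by simp [hb', hi], fun i hi => ?_⟩
  simp [hb', hi, hi₀]

theorem exists_isCompl_map_eq_top (b : Basis ι R M) (ℓ : M →ₗ[R] R) (s : Set ι) {j : ι}
    (hj : j ∉ s) (hℓ : ℓ (b j) = 1) :
    ∃ W : Submodule R M, IsCompl (span R (b '' s)) W ∧ W.map ℓ = ⊤ :=
  ⟨_, b.isCompl_span_image_compl s, (Ideal.eq_top_iff_one _).mpr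
    (hℓ ▸ mem_map_of_mem (subset_span (mem_image_of_mem b hj)))⟩

end Ring

section CommRing

variable {R M ι : Type*} [CommRing R] [AddCommGroup M] [Module R M]

theorem exists_apply_eq_one_of_fin_two (b : Basis (Fin 2) R M) (ℓ : M →ₗ[R] R)
    (h : Ideal.span (range fun i => ℓ (b i)) = ⊤) : ∃ c : Basis (Fin 2) R M, ℓ (c 0) = 1 := by
  obtain ⟨x, hx⟩ := Ideal.mem_span_range_iff_exists_fun.mp (h ▸ mem_top : (1 : R) ∈ _)
  rw [Fin.sum_univ_two] at hx
  set v : Fin 2 → M := ![x 0 • b 0 + x 1 • b 1, -ℓ (b 1) • b 0 + ℓ (b 0) • b 1]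
  have hv := (b.is_basis_iff_det (v := v)).mpr (by
    rw [Basis.det_apply, Matrix.det_fin_two]
    simp [v, Basis.toMatrix_apply, mul_comm (ℓ (b 1)), hx])
  exact ⟨Basis.mk hv.1 hv.2.ge, by simp [v, hx]⟩

theorem exists_span_range_apply_compl_eq_top [IsDedekindDomain R] [Fintype ι]
    (b : Basis ι R M) (ℓ : M →ₗ[R] R) (h : Ideal.span (range fun i => ℓ (b i)) = ⊤)
    (hι : 2 < Fintype.card ι) :
    ∃ (s : ι) (b' : Basis ι R M), Ideal.span (range fun i : ({s}ᶜ : Set ι) => ℓ (b' i)) = ⊤ := by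
  classical
  obtain ⟨s, i, j, hsi, hsj, hij⟩ := Fintype.two_lt_card_iff.mp hι
  obtain ⟨t, hts, ht⟩ := Ideal.exists_span_range_add_mul_eq_top h hsi.symm hsj.symm hij
  obtain ⟨b', hb'⟩ := b.exists_add_smul hts
  exact ⟨s, b', by simpa [hb'] using ht⟩

theorem exists_apply_eq_one [IsDedekindDomain R] [Fintype ι] [Nonempty ι]
    (b : Basis ι R M) (ℓ : M →ₗ[R] R) (h : Ideal.span (range fun i => ℓ (b i)) = ⊤) :
    ∃ (c : Basis ι R M) (j : ι), ℓ (c j) = 1 := by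
  induction hn : Fintype.card ι using Nat.strong_induction_on generalizing ι M with
  | _ n ih =>
  obtain rfl | rfl | hn3 : n = 1 ∨ n = 2 ∨ 2 < n := by
    have := Fintype.card_pos (α := ι); omega
  · obtain ⟨_⟩ := Fintype.card_eq_one_iff_nonempty_unique.mp hn
    obtain ⟨c, hc⟩ := b.exists_apply_eq_one_of_isUnit ℓ (i := default)
      (by simpa [range_unique, Ideal.span_singleton_eq_top] using h)
    exact ⟨c, _, hc⟩
  · let e := Fintype.equivFinOfCardEq hn
    obtain ⟨c, hc⟩ := (b.reindex e).exists_apply_eq_one_of_fin_two ℓ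
      (by simp only [Basis.reindex_apply]; rwa [← e.symm.surjective.range_comp] at h)
    exact ⟨c.reindex e.symm, e.symm 0, by simpa using hc⟩
  · classical
    obtain ⟨s, b', hb'⟩ := b.exists_span_range_apply_compl_eq_top ℓ h (hn ▸ hn3)
    have hcard : Fintype.card ({s}ᶜ : Set ι) = n - 1 := by
      rw [Fintype.card_compl_set, Set.card_singleton, hn]
    have : Nonempty ({s}ᶜ : Set ι) := Fintype.card_pos_iff.mp (by omega)
    obtain ⟨c, j, hc⟩ := ih (n - 1) (by omega) (b'.spanImage {s}ᶜ)
      (ℓ ∘ₗ (span R (b' '' {s}ᶜ)).subtype) (by simpa using hb') hcard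
    obtain ⟨b'', -, hb''⟩ := b'.exists_eqOn_of_isCompl {s} (b'.isCompl_span_image_compl {s}) c
    exact ⟨b'', j, by simpa [hb''] using hc⟩

theorem exists_eqOn_apply_eq_one_of_isCompl [IsDedekindDomain R] [Finite ι] (b : Basis ι R M)
    (ℓ : M →ₗ[R] R) {s : Set ι} (hs : sᶜ.Nonempty) {W : Submodule R M}
    (hW : IsCompl (span R (b '' s)) W) (hℓW : W.map ℓ = ⊤) :
    ∃ b' : Basis ι R M, (∀ i ∈ s, b' i = b i) ∧ ∃ j, ℓ (b' j) = 1 := by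
  have := Fintype.ofFinite ↥sᶜ
  have := hs.to_subtype
  obtain ⟨c₀⟩ := b.nonempty_basis_of_isCompl s hW
  obtain ⟨c, j, hc⟩ := c₀.exists_apply_eq_one (ℓ ∘ₗ W.subtype)
    (by rw [span_range_apply, LinearMap.range_comp, range_subtype, hℓW])
  obtain ⟨b', hb's, hb'c⟩ := b.exists_eqOn_of_isCompl s hW c
  exact ⟨b', hb's, j, by simpa [hb'c] using hc⟩

end CommRing

end Module.Basis

theorem good_partial_basis_characterisation_general
    (O : Type) [CommRing O] [IsDedekindDomain O]
    (n k : ℕ) (hk : k + 1 < n)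
    (L : (Fin n → O) →ₗ[O] O)
    (I : Ideal O)
    (v : Fin (k + 1) → (Fin n → O))
    (hσ : ∃ (b : Module.Basis (Fin n) O (Fin n → O)) (ι : Fin (k + 1) ↪ Fin n),
      ∀ i, b (ι i) = v i)
    (hI : ∀ i, L (v i) ∈ I ∨ L (v i) - 1 ∈ I) :
    ((∃ (b : Module.Basis (Fin n) O (Fin n → O)) (ι : Fin (k + 1) ↪ Fin n),
        (∀ i, b (ι i) = v i) ∧ ∃ m, L (b m) = 1) ↔
      (∃ (b : Module.Basis (Fin n) O (Fin n → O)) (ι : Fin (k + 1) ↪ Fin n),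
        (∀ i, b (ι i) = v i) ∧ (∀ m, L (b m) ∈ I ∨ L (b m) - 1 ∈ I) ∧
        (∃ m, L (b m) = 1) ∧ (∀ m, (∀ i, m ≠ ι i) → L (b m) = 1))) ∧
    ((∃ (b : Module.Basis (Fin n) O (Fin n → O)) (ι : Fin (k + 1) ↪ Fin n),
        (∀ i, b (ι i) = v i) ∧ (∀ m, L (b m) ∈ I ∨ L (b m) - 1 ∈ I) ∧
        (∃ m, L (b m) = 1) ∧ (∀ m, (∀ i, m ≠ ι i) → L (b m) = 1)) ↔
      (∃ W : Submodule O (Fin n → O),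
        IsCompl (Submodule.span O (Set.range v)) W ∧ Submodule.map L W = ⊤)) := by
  have hout (ι : Fin (k + 1) ↪ Fin n) : (range ι)ᶜ.Nonempty := nonempty_compl.mpr fun h => by
    have := Fintype.card_le_of_surjective ι (range_eq_univ.mp h)
    simp only [Fintype.card_fin] at this
    omega
  have not_mem_range {ι : Fin (k + 1) ↪ Fin n} {m : Fin n} : m ∉ range ι ↔ ∀ i, m ≠ ι i := by
    simp [eq_comm]
  have range_v {b : Basis (Fin n) O (Fin n → O)} {ι : Fin (k + 1) ↪ Fin n}
      (hbv : ∀ i, b (ι i) = v i) : range v = b '' range ι := by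
    rw [← range_comp]; exact congrArg range (funext hbv).symm
  refine ⟨⟨?i_ii, fun ⟨b, ι, hbv, _, hgood, _⟩ => ⟨b, ι, hbv, hgood⟩⟩, ⟨?ii_iii, ?i_ii ∘ ?iii_i⟩⟩
  case i_ii =>
    rintro ⟨b, ι, hbv, m₀, hm₀⟩
    obtain ⟨b', hb'ι, hb'1⟩ := b.exists_eqOn_apply_eq_one L hm₀ (range ι)
    have hb'v (i : Fin (k + 1)) : b' (ι i) = v i := (hb'ι _ (mem_range_self i)).trans (hbv i)
    obtain ⟨j, hj⟩ := hout ι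
    refine ⟨b', ι, hb'v, fun m => ?_, ⟨j, hb'1 j hj⟩, fun m hm => hb'1 m (not_mem_range.mpr hm)⟩
    by_cases hm : m ∈ range ι
    · obtain ⟨i, rfl⟩ := hm
      exact hb'v i ▸ hI i
    · simp [hb'1 m hm]
  case ii_iii =>
    rintro ⟨b, ι, hbv, -, -, hb1⟩
    obtain ⟨j, hj⟩ := hout ι
    exact range_v hbv ▸ b.exists_isCompl_map_eq_top L _ hj (hb1 j (not_mem_range.mp hj))
  case iii_i =>
    rintro ⟨W, hW, hLW⟩
    obtain ⟨b₀, ι, hb₀⟩ := hσ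
    obtain ⟨b, hbι, j, hj⟩ :=
      b₀.exists_eqOn_apply_eq_one_of_isCompl L (hout ι) (range_v hb₀ ▸ hW) hLW
    exact ⟨b, ι, fun i => (hbι _ (mem_range_self i)).trans (hb₀ i), j, hj⟩

/-- **Proposition (characterisation of good partial bases).**  Let `O` be a Dedekind
domain, `L : O^n → O` surjective, `I ⊆ O` an ideal, and `σ = {v₁, …, v_{k+1}}` a partial
basis of `O^n` with `k + 1 < n` such that each `L vᵢ` is congruent to `0` or `1` mod `I`.
Then the following are equivalent:
(i) `σ` is contained in a good basis (one containing a vector with `L`-value `1`);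
(ii) `σ` is contained in a good `I`-basis whose vectors outside `σ` all have `L`-value `1`;
(iii) the span `V_σ` has a complement `W` in `O^n` with `L(W) = O`. -/
theorem good_partial_basis_characterisation
    (O : Type) [CommRing O] [IsDomain O] [IsDedekindDomain O]
    (n k : ℕ) (hk : k + 1 < n)
    (L : (Fin n → O) →ₗ[O] O) (hL : Function.Surjective L)
    (I : Ideal O)
    (v : Fin (k + 1) → (Fin n → O))
    (hσ : ∃ (b : Module.Basis (Fin n) O (Fin n → O)) (ι : Fin (k + 1) ↪ Fin n),
      ∀ i, b (ι i) = v i)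
    (hI : ∀ i, L (v i) ∈ I ∨ L (v i) - 1 ∈ I) :
    ((∃ (b : Module.Basis (Fin n) O (Fin n → O)) (ι : Fin (k + 1) ↪ Fin n),
        (∀ i, b (ι i) = v i) ∧ ∃ m, L (b m) = 1) ↔
      (∃ (b : Module.Basis (Fin n) O (Fin n → O)) (ι : Fin (k + 1) ↪ Fin n),
        (∀ i, b (ι i) = v i) ∧ (∀ m, L (b m) ∈ I ∨ L (b m) - 1 ∈ I) ∧
        (∃ m, L (b m) = 1) ∧ (∀ m, (∀ i, m ≠ ι i) → L (b m) = 1))) ∧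
    ((∃ (b : Module.Basis (Fin n) O (Fin n → O)) (ι : Fin (k + 1) ↪ Fin n),
        (∀ i, b (ι i) = v i) ∧ (∀ m, L (b m) ∈ I ∨ L (b m) - 1 ∈ I) ∧
        (∃ m, L (b m) = 1) ∧ (∀ m, (∀ i, m ≠ ι i) → L (b m) = 1)) ↔
      (∃ W : Submodule O (Fin n → O),
        IsCompl (Submodule.span O (Set.range v)) W ∧ Submodule.map L W = ⊤)) :=
  good_partial_basis_characterisation_general O n k hk L I v hσ hI
end

section
/- Let O be a Dedekind domain and L : O^n → O a surjective O-linear map. Let σ = {v₁, …, v_{k+1}} be a family extending to a basis of O^n with k + 1 < n, and let I_σ ⊆ O be the ideal generated by L(v₁), …, L(v_{k+1}). If I_σ = (0), or I_σ = O, or k + 1 < n − 1, then σ is contained in a good basis of O^n. -/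
/-!
Let `w₁, …, w_r` complete `σ` to a basis; surjectivity of `L` says that the values of `L` on
this basis generate `O`. If `I_σ = O`, adding to `w₁` a combination of the `vᵢ` makes
`L w₁ = 1`; if `I_σ = 0` and `r = 1`, then `L w₁` is a unit and we rescale `w₁`. If `r ≥ 2`,
the stable range property of Dedekind domains (a Chinese remainder argument) gives a unimodular
pair `(x, y)` with `x L(w₁) + y L(w₂) ≡ 1` modulo the ideal generated by the other values of
`L`. Replacing `(w₁, w₂)` through a matrix of `SL₂(O)` with first row `(x, y)`, and then adding
to `w₁` a combination of the remaining basis vectors, makes `L w₁ = 1`. A genuine `SL₂` step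
is needed: over a Dedekind domain `SL₂` need not be generated by elementary matrices.
-/

open Function IsDedekindDomain

namespace Module.Basis

variable {ι R M : Type*} [AddCommGroup M]

section Ring

variable [Ring R] [Module R M] [DecidableEq ι] (b : Basis ι R M)

theorem exists_coe_eq_update_of_isUnit_repr {t : ι} {u : M} (hu : IsUnit (b.repr u t)) :
    ∃ b' : Basis ι R M, ⇑b' = update b t u := by
  have h : IsUnit (1 + b.coord t (u - b t)) := by simpa using hu
  refine ⟨b.map (LinearEquiv.dilatransvection h), funext fun l => ?_⟩
  rcases eq_or_ne l t with rfl | hl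
  · simp [LinearEquiv.dilatransvection.apply]
  · simp [LinearEquiv.dilatransvection.apply, hl]

theorem exists_coe_eq_update_add_of_mem_span {t : ι} {s : Set ι} (ht : t ∉ s) {c : M}
    (hc : c ∈ Submodule.span R (b '' s)) :
    ∃ b' : Basis ι R M, ⇑b' = update b t (b t + c) := by
  refine b.exists_coe_eq_update_of_isUnit_repr ?_
  have : b.repr c t = 0 := Finsupp.notMem_support_iff.mp fun h => ht (b.mem_span_image.mp hc h)
  simp [this]

end Ring

theorem exists_apply_eq_smul_add_smul_of_isCoprime [CommRing R] [Module R M] (b : Basis ι R M)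
    {i j : ι} (hij : i ≠ j) {x y : R} (hxy : IsCoprime x y) :
    ∃ b' : Basis ι R M, b' i = x • b i + y • b j ∧ ∀ l, l ≠ i → l ≠ j → b' l = b l := by
  classical
  obtain ⟨p, q, hpq⟩ := hxy
  -- `f` acts on `(b i, b j)` through `!![x, -q; y, p]` of determinant `p x + q y = 1`,
  -- and `g` through its inverse.
  set f := b.constr R (update (update b i (x • b i + y • b j)) j (-q • b i + p • b j))
  set g := b.constr R (update (update b i (p • b i - y • b j)) j (q • b i + x • b j))
  have hf : ∀ l, f (b l) = _ := b.constr_basis R _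
  have hg : ∀ l, g (b l) = _ := b.constr_basis R _
  have hinv : ∀ l, f (g (b l)) = b l ∧ g (f (b l)) = b l := fun l => by
    obtain rfl | hli := eq_or_ne l i
    · simp only [hf, hg, hij, ne_eq, not_false_eq_true, update_self, update_of_ne, map_add, map_sub,
        map_smul, neg_smul, smul_add, smul_neg]
      constructor <;> linear_combination (norm := module) hpq • b l
    obtain rfl | hlj := eq_or_ne l j
    · simp only [hf, hg, hij, ne_eq, not_false_eq_true, update_self, update_of_ne, map_add, map_neg,
        map_smul, neg_smul, smul_add, smul_neg]
      constructor <;> linear_combination (norm := module) hpq • b l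
    simp [hf, hg, hli, hlj]
  have hfg : f ∘ₗ g = LinearMap.id := b.ext fun l => (hinv l).1
  have hgf : g ∘ₗ f = LinearMap.id := b.ext fun l => (hinv l).2
  refine ⟨b.map (LinearEquiv.ofLinearMap f g hfg hgf), ?_, fun l hli hlj => ?_⟩
  · simp [hf, hij]
  · simp [hf, hli, hlj]

end Module.Basis

section Dedekind

variable {O : Type*} [CommRing O] [IsDedekindDomain O]

theorem exists_isCoprime_add_mul_s14 {a b c : O} (ha : a ≠ 0) (h : Ideal.span {a, b, c} = ⊤) :
    ∃ μ, IsCoprime a (b + μ * c) := by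
  classical
  set s := (Ideal.finite_factors (I := Ideal.span {a}) (by simpa using ha)).toFinset
  obtain ⟨μ, hμ⟩ := exists_forall_sub_mem_ideal (s := s) HeightOneSpectrum.asIdeal (fun _ => 1)
    (fun v _ => v.prime) (fun v _ w _ hvw h => hvw (HeightOneSpectrum.ext h))
    (fun v => if b ∈ v.1.asIdeal then 1 else 0)
  -- `μ ≡ 1` at the primes over `a` containing `b` and `μ ≡ 0` at the others, so that
  -- `b + μ * c` lies in none of them.
  refine ⟨μ, ?_⟩
  rw [← Ideal.isCoprime_span_singleton_iff, Ideal.isCoprime_iff_sup_eq]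
  by_contra hne
  obtain ⟨P, hP, hle⟩ := Ideal.exists_le_maximal _ hne
  have haP : a ∈ P := hle (Ideal.mem_sup_left (Ideal.mem_span_singleton_self a))
  have hbcP : b + μ * c ∈ P := hle (Ideal.mem_sup_right (Ideal.mem_span_singleton_self _))
  let v : HeightOneSpectrum O := ⟨P, hP.isPrime, fun h0 => ha (by simpa [h0] using haP)⟩
  have hv : v ∈ s := by simpa [s, v, Ideal.dvd_iff_le] using haP
  have hμv := hμ v hv
  by_cases hbP : b ∈ P
  · have hcP : c ∈ P := by
      have : μ - 1 ∈ P := by simpa [v, hbP] using hμv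
      convert P.sub_mem (P.sub_mem hbcP hbP) (P.mul_mem_right c this) using 1
      ring
    refine hP.ne_top (top_le_iff.mp (h ▸ Ideal.span_le.mpr ?_))
    simp [Set.insert_subset_iff, haP, hbP, hcP]
  · have : μ ∈ P := by simpa [v, hbP] using hμv
    exact hbP (by simpa using P.sub_mem hbcP (P.mul_mem_right c this))

theorem exists_isCoprime_add_mul_add_mul {a b c : O} (h : Ideal.span {a, b, c} = ⊤) :
    ∃ l m, IsCoprime (a + l * c) (b + m * c) := by
  rcases eq_or_ne a 0 with rfl | ha
  · obtain ⟨u, w, huw⟩ : ∃ u w, u * b + w * c = 1 := by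
      simpa [Ideal.eq_top_iff_one, Ideal.mem_span_pair] using h
    exact ⟨1, 0, w, u, by linear_combination huw⟩
  · obtain ⟨m, hm⟩ := exists_isCoprime_add_mul_s14 ha h
    exact ⟨0, m, by simpa using hm⟩

theorem exists_isCoprime_mul_add_mul_sub_one_mem {a b : O} {J : Ideal O}
    (h : Ideal.span {a, b} ⊔ J = ⊤) : ∃ x y, IsCoprime x y ∧ x * a + y * b - 1 ∈ J := by
  obtain ⟨z, hz, t, ht, hzt⟩ := Submodule.mem_sup.mp (h ▸ Submodule.mem_top : (1 : O) ∈ _)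
  obtain ⟨α, β, rfl⟩ := Ideal.mem_span_pair.mp hz
  have hαβt : Ideal.span {α, β, t} = ⊤ := by
    rw [Ideal.eq_top_iff_one, ← hzt]
    have mem : ∀ x ∈ ({α, β, t} : Set O), x ∈ Ideal.span {α, β, t} :=
      fun _ hx => Ideal.subset_span hx
    exact add_mem (add_mem (Ideal.mul_mem_right _ _ (mem α (by simp)))
      (Ideal.mul_mem_right _ _ (mem β (by simp)))) (mem t (by simp))
  obtain ⟨l, m, hlm⟩ := exists_isCoprime_add_mul_add_mul hαβt
  refine ⟨α + l * t, β + m * t, hlm, ?_⟩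
  rw [show (α + l * t) * a + (β + m * t) * b - 1 = t * (l * a + m * b - 1) by
    linear_combination hzt]
  exact J.mul_mem_right _ ht

end Dedekind

namespace LinearMap

variable {ι O M : Type*} [CommRing O] [AddCommGroup M] [Module O M] (L : M →ₗ[O] O)
  (b : Module.Basis ι O M) {S : Set ι}

theorem span_range_apply_basis_eq_top (hL : Surjective L) :
    Ideal.span (Set.range fun i => L (b i)) = ⊤ := by
  rw [Set.range_comp' L b, Ideal.span, ← Submodule.map_span, b.span_eq, Submodule.map_top,
    range_eq_top.mpr hL]

theorem exists_mem_span_apply_eq_of_mem_span_image {s : Set M} {z : O}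
    (hz : z ∈ Ideal.span (L '' s)) : ∃ c ∈ Submodule.span O s, L c = z := by
  rwa [Ideal.span, ← Submodule.map_span] at hz

theorem exists_basis_eqOn_apply_eq_one_of_span_eq_top {t : ι} (ht : t ∉ S)
    (hS : Ideal.span (L '' (b '' S)) = ⊤) :
    ∃ b' : Module.Basis ι O M, Set.EqOn b' b S ∧ ∃ m, L (b' m) = 1 := by
  classical
  obtain ⟨c, hc, hLc⟩ :=
    L.exists_mem_span_apply_eq_of_mem_span_image (s := b '' S) (z := 1 - L (b t)) (by simp [hS])
  obtain ⟨b', hb'⟩ := b.exists_coe_eq_update_add_of_mem_span ht hc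
  refine ⟨b', fun s hs => ?_, t, ?_⟩
  · rw [hb', update_of_ne (ne_of_mem_of_not_mem hs ht)]
  · simp [hb', hLc]

theorem exists_basis_eqOn_apply_eq_one_of_forall_ne_apply_eq_zero (hL : Surjective L) {t : ι}
    (ht : t ∉ S) (h0 : ∀ s ≠ t, L (b s) = 0) :
    ∃ b' : Module.Basis ι O M, Set.EqOn b' b S ∧ ∃ m, L (b' m) = 1 := by
  classical
  have hunit : IsUnit (L (b t)) := by
    rw [← Ideal.span_singleton_eq_top, eq_top_iff, ← L.span_range_apply_basis_eq_top b hL,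
      Ideal.span_le]
    rintro _ ⟨s, rfl⟩
    rcases eq_or_ne s t with rfl | hs
    · exact Ideal.mem_span_singleton_self _
    · simp [h0 s hs]
  obtain ⟨b', hb'⟩ := b.exists_coe_eq_update_of_isUnit_repr (t := t) (u := ↑hunit.unit⁻¹ • b t)
    (by simp [Units.smul_def])
  refine ⟨b', fun s hs => ?_, t, ?_⟩
  · rw [hb', update_of_ne (ne_of_mem_of_not_mem hs ht)]
  · simp [hb', Units.smul_def]

theorem exists_basis_eqOn_apply_eq_one_of_ne [IsDedekindDomain O] (hL : Surjective L)
    {t₀ t₁ : ι} (h01 : t₀ ≠ t₁) (h₀ : t₀ ∉ S) (h₁ : t₁ ∉ S) :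
    ∃ b' : Module.Basis ι O M, Set.EqOn b' b S ∧ ∃ m, L (b' m) = 1 := by
  classical
  set rest : Set ι := {t₀, t₁}ᶜ
  have hsup : Ideal.span {L (b t₀), L (b t₁)} ⊔ Ideal.span (L '' (b '' rest)) = ⊤ := by
    rw [eq_top_iff, ← L.span_range_apply_basis_eq_top b hL, Ideal.span_le]
    rintro _ ⟨l, rfl⟩
    by_cases hl : l ∈ rest
    · exact Ideal.mem_sup_right (Ideal.subset_span ⟨b l, ⟨l, hl, rfl⟩, rfl⟩)
    · refine Ideal.mem_sup_left (Ideal.subset_span ?_)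
      obtain rfl | rfl : l = t₀ ∨ l = t₁ := by simpa [rest, or_iff_not_imp_left] using hl
      all_goals simp
  obtain ⟨x, y, hxy, hJ⟩ := exists_isCoprime_mul_add_mul_sub_one_mem hsup
  obtain ⟨c, hc, hLc⟩ := L.exists_mem_span_apply_eq_of_mem_span_image (neg_mem hJ)
  obtain ⟨b₁, hb₁t₀, hb₁⟩ := b.exists_apply_eq_smul_add_smul_of_isCoprime h01 hxy
  have hrest : b₁ '' rest = b '' rest :=
    Set.image_congr fun l hl => hb₁ l (by simp_all [rest]) (by simp_all [rest])
  obtain ⟨b₂, hb₂⟩ :=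
    b₁.exists_coe_eq_update_add_of_mem_span (t := t₀) (s := rest) (by simp [rest]) (hrest ▸ hc)
  refine ⟨b₂, fun s hs => ?_, t₀, ?_⟩
  · have hs₀ := ne_of_mem_of_not_mem hs h₀
    rw [hb₂, update_of_ne hs₀, hb₁ s hs₀ (ne_of_mem_of_not_mem hs h₁)]
  · simp only [hb₂, update_self, map_add, hb₁t₀, hLc, map_smul, smul_eq_mul]
    ring

end LinearMap

theorem contained_in_good_basis_general
    (O : Type) [CommRing O] [IsDedekindDomain O]
    (n k : ℕ) (hk : k + 1 < n)
    (L : (Fin n → O) →ₗ[O] O) (hL : Function.Surjective L)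
    (v : Fin (k + 1) → (Fin n → O))
    (hσ : ∃ (b : Module.Basis (Fin n) O (Fin n → O)) (ι : Fin (k + 1) ↪ Fin n),
      ∀ i, b (ι i) = v i)
    (hcase : Ideal.span (Set.range fun i => L (v i)) = ⊥ ∨
      Ideal.span (Set.range fun i => L (v i)) = ⊤ ∨ k + 2 < n) :
    ∃ (b : Module.Basis (Fin n) O (Fin n → O)) (ι : Fin (k + 1) ↪ Fin n),
      (∀ i, b (ι i) = v i) ∧ ∃ m, L (b m) = 1 := by
  classical
  obtain ⟨b, ι, hb⟩ := hσ
  suffices ∃ b' : Module.Basis (Fin n) O (Fin n → O), Set.EqOn b' b (Set.range ι) ∧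
      ∃ m, L (b' m) = 1 by
    obtain ⟨b', hb', hgood⟩ := this
    exact ⟨b', ι, fun i => (hb' (Set.mem_range_self i)).trans (hb i), hgood⟩
  set T := (Finset.univ.map ι)ᶜ
  have hT : ∀ t, t ∈ T ↔ t ∉ Set.range ι := by simp [T]
  have hcard : T.card = n - (k + 1) := by simp [T, Finset.card_compl]
  rcases (by omega : 1 < n - (k + 1) ∨ n - (k + 1) = 1) with hr | hr
  · obtain ⟨t₀, h₀, t₁, h₁, h01⟩ := Finset.one_lt_card.mp (hcard ▸ hr)
    exact L.exists_basis_eqOn_apply_eq_one_of_ne b hL h01 ((hT _).mp h₀) ((hT _).mp h₁)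
  obtain ⟨t, hTt⟩ := Finset.card_eq_one.mp (hcard ▸ hr)
  have ht : t ∉ Set.range ι := (hT t).mp (by simp [hTt])
  have hI : L '' (b '' Set.range ι) = Set.range fun i => L (v i) := by
    ext; simp [hb]
  rcases hcase with hbot | htop | hlarge
  · refine L.exists_basis_eqOn_apply_eq_one_of_forall_ne_apply_eq_zero b hL ht fun s hs => ?_
    obtain ⟨i, rfl⟩ : s ∈ Set.range ι := by
      by_contra h; exact hs (by simpa [hTt] using (hT s).mpr h)
    rw [hb, ← Ideal.mem_bot, ← hbot]
    exact Ideal.subset_span ⟨i, rfl⟩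
  · exact L.exists_basis_eqOn_apply_eq_one_of_span_eq_top b ht (hI ▸ htop)
  · omega

/-- **Proposition.**  Let `O` be a Dedekind domain and `L : O^n → O` a surjective linear
map.  Let `σ = {v₁, …, v_{k+1}}` be a partial basis of `O^n` with `k + 1 < n`, and let
`I_σ` be the ideal generated by `L v₁, …, L v_{k+1}`.  If `I_σ = (0)`, or `I_σ = O`, or
`k + 1 < n - 1`, then `σ` is contained in a good basis of `O^n` (a basis containing a
vector with `L`-value `1`). -/
theorem contained_in_good_basis
    (O : Type) [CommRing O] [IsDomain O] [IsDedekindDomain O]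
    (n k : ℕ) (hk : k + 1 < n)
    (L : (Fin n → O) →ₗ[O] O) (hL : Function.Surjective L)
    (v : Fin (k + 1) → (Fin n → O))
    (hσ : ∃ (b : Module.Basis (Fin n) O (Fin n → O)) (ι : Fin (k + 1) ↪ Fin n),
      ∀ i, b (ι i) = v i)
    (hcase : Ideal.span (Set.range fun i => L (v i)) = ⊥ ∨
      Ideal.span (Set.range fun i => L (v i)) = ⊤ ∨ k + 2 < n) :
    ∃ (b : Module.Basis (Fin n) O (Fin n → O)) (ι : Fin (k + 1) ↪ Fin n),
      (∀ i, b (ι i) = v i) ∧ ∃ m, L (b m) = 1 :=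
  contained_in_good_basis_general O n k hk L hL v hσ hcase
end

section
/- Let n ≥ 1. A permutation σ ∈ S_n is good, i.e. satisfies s_σ(k) ∈ {k, k+1} for every 1 ≤ k ≤ n, if and only if there exists ε = (ε₁, …, ε_{n−1}) ∈ {0,1}^{n−1} such that σ equals the ordered product (1 2)^{ε₁}·(2 3)^{ε₂}·⋯·(n−1 n)^{ε_{n−1}} of adjacent transpositions. Moreover, for such σ = σ_ε and each 1 ≤ k < n one has s_σ(k) = k + ε_k. -/
/-- For a permutation `σ` of `{1, …, n}` (encoded as `Equiv.Perm (Fin n)` with element `i`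
of `{1, …, n}` corresponding to `(⟨i-1, _⟩ : Fin n)`), `permSup n σ k` is
`s_σ(k) = max {σ(i) : 1 ≤ i ≤ k}`, computed in 1-based terms (it is `0` for `k = 0`). -/
def permSup (n : ℕ) (σ : Equiv.Perm (Fin n)) (k : ℕ) : ℕ :=
  (Finset.univ.filter fun i : Fin n => (i : ℕ) + 1 ≤ k).sup fun i => (σ i : ℕ) + 1

/-- A permutation `σ` of `{1, …, n}` is good if `s_σ(k) ∈ {k, k+1}` for all `1 ≤ k ≤ n`. -/
def IsGoodPerm (n : ℕ) (σ : Equiv.Perm (Fin n)) : Prop :=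
  ∀ k : ℕ, 1 ≤ k → k ≤ n → permSup n σ k = k ∨ permSup n σ k = k + 1

/-- The ordered product `(1 2)^{ε₁} · (2 3)^{ε₂} · ⋯ · (n-1 n)^{ε_{n-1}}` of adjacent
transpositions; in the `Fin n` encoding the transposition `(k k+1)` (1-based) swaps the
elements `a` and `a+1` of `Fin n` where `(a : ℕ) + 1 = k`. -/
def adjacentProd (n : ℕ) (ε : Fin n → Bool) : Equiv.Perm (Fin n) :=
  (List.ofFn fun a : Fin n =>
    if h : (a : ℕ) + 1 < n then
      (if ε a then Equiv.swap a ⟨(a : ℕ) + 1, h⟩ else 1)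
    else 1).prod

/-!
A permutation is good exactly when `σ(i) ≤ i + 1` for all `i`: the first `k` values of any
permutation cannot all lie below `k`, so `s_σ(k) ≥ k` always, and then `s_σ(k) ≤ k + 1` bounds
each value. Such a permutation is determined by the set of `i` with `σ(i) = i + 1`, since
otherwise `σ(i)` is the one element of `{1, …, i}` missed by `σ(1), …, σ(i-1)`. In
`σ_ε = (1 2)^{ε₁} ⋯ (n-1 n)^{ε_{n-1}}` the point `i` is fixed by the factors applied before
`(i i+1)`, and the factors applied after it permute `{1, …, i}`; so `σ_ε(i) = i + 1` if
`ε_i = 1` and `σ_ε(i) ≤ i` otherwise. Finally, for such `σ`, `s_σ(k) = k + 1` exactly when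
`σ(k) = k + 1`.
-/

open Finset

namespace Equiv.Perm

theorem list_prod_apply_eq_self {α : Type*} {l : List (Perm α)} {x : α}
    (h : ∀ g ∈ l, g x = x) : l.prod x = x :=
  MulAction.mem_stabilizer_iff.1 <| (MulAction.stabilizer (Perm α) x).list_prod_mem
    fun g hg => MulAction.mem_stabilizer_iff.2 (h g hg)

theorem apply_le_of_forall_lt_apply_eq {α : Type*} [LinearOrder α] (σ : Perm α) {x : α}
    (h : ∀ y, x < y → σ y = y) : σ x ≤ x := by
  by_contra! hx
  exact hx.ne' (σ.injective (h _ hx))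

end Equiv.Perm

section PermSup

variable {n : ℕ} (σ : Equiv.Perm (Fin n))

theorem permSup_succ (a : Fin n) :
    permSup n σ (a + 1) = (Iic a).sup fun i => (σ i : ℕ) + 1 := by
  have : (univ.filter fun i : Fin n => (i : ℕ) + 1 ≤ a + 1) = Iic a := Finset.ext fun i => by
    simp only [mem_filter, mem_univ, true_and, mem_Iic, Fin.le_def]
    omega
  rw [permSup, this]

theorem apply_succ_le_permSup_succ {i a : Fin n} (h : i ≤ a) :
    (σ i : ℕ) + 1 ≤ permSup n σ (a + 1) := by
  rw [permSup_succ]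
  exact le_sup (f := fun i => (σ i : ℕ) + 1) (mem_Iic.2 h)

theorem succ_le_permSup_succ (a : Fin n) : (a : ℕ) + 1 ≤ permSup n σ (a + 1) := by
  obtain ⟨i, hi, hai⟩ : ∃ i ≤ a, a ≤ σ i := by
    by_contra! h
    have := card_le_card_of_injOn σ (s := Iic a) (t := Iio a)
      (fun i hi => mem_Iio.2 (h i (mem_Iic.1 hi))) σ.injective.injOn
    simp at this
  have := apply_succ_le_permSup_succ σ hi
  rw [Fin.le_def] at hai
  omega

theorem permSup_succ_eq_of_forall_apply_le_succ (hσ : ∀ i, (σ i : ℕ) ≤ i + 1) (a : Fin n) :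
    permSup n σ (a + 1) = a + 1 + if (σ a : ℕ) = a + 1 then 1 else 0 := by
  refine le_antisymm ?_ ?_
  · rw [permSup_succ, Finset.sup_le_iff]
    intro i hi
    have := hσ i
    rcases (mem_Iic.1 hi).lt_or_eq with hlt | rfl
    · rw [Fin.lt_def] at hlt
      split_ifs <;> omega
    · split_ifs <;> omega
  · split_ifs with h
    · have := apply_succ_le_permSup_succ σ (le_refl a)
      omega
    · simpa using succ_le_permSup_succ σ a

theorem isGoodPerm_iff_forall_apply_le_succ :
    IsGoodPerm n σ ↔ ∀ i : Fin n, (σ i : ℕ) ≤ i + 1 := by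
  constructor
  · intro hσ i
    have := apply_succ_le_permSup_succ σ (le_refl i)
    rcases hσ (i + 1) (by omega) i.isLt with h | h <;> omega
  · intro hσ k hk hkn
    obtain ⟨a, rfl⟩ : ∃ a : Fin n, (a : ℕ) + 1 = k := ⟨⟨k - 1, by omega⟩, by simp; omega⟩
    rw [permSup_succ_eq_of_forall_apply_le_succ σ hσ a]
    split_ifs <;> simp

theorem card_Iic_sdiff_image_Iio (hσ : ∀ i, (σ i : ℕ) ≤ i + 1) (i : Fin n) :
    #(Iic i \ (Iio i).image σ) = 1 := by
  have hsub : (Iio i).image σ ⊆ Iic i := by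
    intro j hj
    obtain ⟨k, hk, rfl⟩ := mem_image.1 hj
    have := hσ k
    rw [mem_Iio, Fin.lt_def] at hk
    rw [mem_Iic, Fin.le_def]
    omega
  rw [card_sdiff_of_subset hsub, card_image_of_injective _ σ.injective, Fin.card_Iic,
    Fin.card_Iio]
  omega

theorem apply_mem_Iic_sdiff_image_Iio {i : Fin n} (hi : (σ i : ℕ) ≤ i) :
    σ i ∈ Iic i \ (Iio i).image σ := by
  simp [σ.injective.mem_finset_image, Fin.le_def, hi]

end PermSup

theorem eq_of_forall_apply_le_succ {n : ℕ} {σ τ : Equiv.Perm (Fin n)}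
    (hσ : ∀ i, (σ i : ℕ) ≤ i + 1) (hτ : ∀ i, (τ i : ℕ) ≤ i + 1) (h : ∀ i, (σ i : ℕ) = i + 1 ↔ (τ i : ℕ) = i + 1) :
    σ = τ := by
  refine Equiv.ext fun i => ?_
  induction i using Fin.strong_induction_on with
  | _ i ih =>
  by_cases hi : (σ i : ℕ) = i + 1
  · exact Fin.ext (hi.trans ((h i).1 hi).symm)
  · have hσi := apply_mem_Iic_sdiff_image_Iio σ (i := i) (by have := hσ i; omega)
    have hτi := apply_mem_Iic_sdiff_image_Iio τ (i := i)
      (by have := hτ i; have := mt (h i).2 hi; omega)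
    rw [image_congr fun j hj => (ih j (mem_Iio.1 hj)).symm] at hτi
    exact card_le_one.1 (card_Iic_sdiff_image_Iio σ hσ i).le _ hσi _ hτi

section AdjacentProd

variable {n : ℕ} (ε : Fin n → Bool)

def adjacentSwap (a : Fin n) : Equiv.Perm (Fin n) :=
  if h : (a : ℕ) + 1 < n then (if ε a then Equiv.swap a ⟨(a : ℕ) + 1, h⟩ else 1) else 1

theorem adjacentProd_eq_prod_ofFn : adjacentProd n ε = (List.ofFn (adjacentSwap ε)).prod := rfl

theorem adjacentSwap_apply_of_ne {a y : Fin n} (h₁ : y ≠ a) (h₂ : (y : ℕ) ≠ a + 1) :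
    adjacentSwap ε a y = y := by
  unfold adjacentSwap
  split_ifs
  · exact Equiv.swap_apply_of_ne_of_ne h₁ (by simpa [Fin.ext_iff] using h₂)
  all_goals rfl

theorem adjacentSwap_apply_self {a : Fin n} (h : (a : ℕ) + 1 < n) (hε : ε a) :
    (adjacentSwap ε a a : ℕ) = a + 1 := by
  simp [adjacentSwap, h, hε]

theorem adjacentSwap_eq_one {a : Fin n} (h : ¬((a : ℕ) + 1 < n ∧ ε a)) :
    adjacentSwap ε a = 1 := by
  unfold adjacentSwap
  split_ifs <;> simp_all

theorem prod_take_adjacentSwap_apply_of_lt {x y : Fin n} (h : x < y) :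
    ((List.ofFn (adjacentSwap ε)).take x).prod y = y := by
  refine Equiv.Perm.list_prod_apply_eq_self fun g hg => ?_
  obtain ⟨j, hj, rfl⟩ := List.mem_take_iff_getElem.1 hg
  rw [Fin.lt_def] at h
  simp only [List.length_ofFn, lt_min_iff] at hj
  rw [List.getElem_ofFn]
  exact adjacentSwap_apply_of_ne ε (Fin.ne_of_val_ne (by simp; omega)) (by simp; omega)

theorem adjacentProd_apply (x : Fin n) :
    adjacentProd n ε x = ((List.ofFn (adjacentSwap ε)).take x).prod (adjacentSwap ε x x) := by
  have hx : (x : ℕ) < (List.ofFn (adjacentSwap ε)).length := by simp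
  have hsuffix : ((List.ofFn (adjacentSwap ε)).drop (x + 1)).prod x = x := by
    refine Equiv.Perm.list_prod_apply_eq_self fun g hg => ?_
    obtain ⟨j, hj, rfl⟩ := List.mem_drop_iff_getElem.1 hg
    rw [List.getElem_ofFn]
    exact adjacentSwap_apply_of_ne ε (Fin.ne_of_val_ne (by simp; omega)) (by simp; omega)
  conv_lhs => rw [adjacentProd_eq_prod_ofFn, ← List.take_append_drop x (List.ofFn _),
    List.drop_eq_getElem_cons hx]
  rw [List.prod_append, List.prod_cons, Equiv.Perm.mul_apply, Equiv.Perm.mul_apply, hsuffix,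
    List.getElem_ofFn]

theorem adjacentProd_apply_val_of_swap {x : Fin n} (h : (x : ℕ) + 1 < n) (hε : ε x) :
    (adjacentProd n ε x : ℕ) = x + 1 := by
  have hfix : ((List.ofFn (adjacentSwap ε)).take x).prod (adjacentSwap ε x x) =
      adjacentSwap ε x x := by
    refine prod_take_adjacentSwap_apply_of_lt ε ?_
    rw [Fin.lt_def, adjacentSwap_apply_self ε h hε]
    omega
  rw [adjacentProd_apply, hfix, adjacentSwap_apply_self ε h hε]

theorem adjacentProd_apply_le_self {x : Fin n} (h : ¬((x : ℕ) + 1 < n ∧ ε x)) :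
    adjacentProd n ε x ≤ x := by
  rw [adjacentProd_apply, adjacentSwap_eq_one ε h, Equiv.Perm.one_apply]
  exact Equiv.Perm.apply_le_of_forall_lt_apply_eq _ fun y hy =>
    prod_take_adjacentSwap_apply_of_lt ε hy

theorem adjacentProd_apply_val_eq_succ_iff (x : Fin n) :
    (adjacentProd n ε x : ℕ) = x + 1 ↔ (x : ℕ) + 1 < n ∧ ε x := by
  by_cases h : (x : ℕ) + 1 < n ∧ ε x
  · exact iff_of_true (adjacentProd_apply_val_of_swap ε h.1 h.2) h
  · have := Fin.le_def.1 (adjacentProd_apply_le_self ε h)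
    exact iff_of_false (by omega) h

theorem adjacentProd_apply_le_succ (x : Fin n) : (adjacentProd n ε x : ℕ) ≤ x + 1 := by
  by_cases h : (x : ℕ) + 1 < n ∧ ε x
  · exact (adjacentProd_apply_val_of_swap ε h.1 h.2).le
  · exact (Fin.le_def.1 (adjacentProd_apply_le_self ε h)).trans (Nat.le_succ x)

end AdjacentProd

theorem goodPerm_iff_adjacentProd_general (n : ℕ) (σ : Equiv.Perm (Fin n)) :
    (IsGoodPerm n σ ↔ ∃ ε : Fin n → Bool, σ = adjacentProd n ε) ∧
    (∀ ε : Fin n → Bool, σ = adjacentProd n ε →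
      ∀ a : Fin n, (a : ℕ) + 1 < n →
        permSup n σ ((a : ℕ) + 1) = (a : ℕ) + 1 + (if ε a then 1 else 0)) := by
  refine ⟨⟨fun hσ => ?_, ?_⟩, ?_⟩
  · rw [isGoodPerm_iff_forall_apply_le_succ] at hσ
    refine ⟨fun a => decide ((σ a : ℕ) = a + 1),
      eq_of_forall_apply_le_succ hσ (adjacentProd_apply_le_succ _) fun a => ?_⟩
    rw [adjacentProd_apply_val_eq_succ_iff]
    have := (σ a).isLt
    simp only [decide_eq_true_eq]
    omega
  · rintro ⟨ε, rfl⟩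
    exact (isGoodPerm_iff_forall_apply_le_succ _).2 (adjacentProd_apply_le_succ ε)
  · rintro ε rfl a ha
    rw [permSup_succ_eq_of_forall_apply_le_succ _ (adjacentProd_apply_le_succ ε)]
    simp [adjacentProd_apply_val_eq_succ_iff, ha]

/-- **Claim (description of good permutations).**  A permutation `σ ∈ S_n` is good (i.e.
`s_σ(k) ∈ {k, k+1}` for all `k`) if and only if it is an ordered product
`(1 2)^{ε₁} ⋯ (n-1 n)^{ε_{n-1}}` with `ε ∈ {0,1}^{n-1}`; moreover for such `σ = σ_ε` and
each `1 ≤ k < n` one has `s_σ(k) = k + ε_k`. -/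
theorem goodPerm_iff_adjacentProd (n : ℕ) (hn : 1 ≤ n) (σ : Equiv.Perm (Fin n)) :
    (IsGoodPerm n σ ↔ ∃ ε : Fin n → Bool, σ = adjacentProd n ε) ∧
    (∀ ε : Fin n → Bool, σ = adjacentProd n ε →
      ∀ a : Fin n, (a : ℕ) + 1 < n →
        permSup n σ ((a : ℕ) + 1) = (a : ℕ) + 1 + (if ε a then 1 else 0)) :=
  goodPerm_iff_adjacentProd_general n σ
end

section
/- Let n ≥ 2 and let σ ∈ S_n be a bad permutation. Set x_σ = max{x ∈ {2, …, n−1} : s_σ(x−1) > x} and y_σ = min{y ∈ {x_σ + 1, …, n} : s_σ(y) = y}, and define σ̄ = σ·(x_σ y_σ), i.e. σ̄(i) = σ(τ(i)) where τ is the transposition exchanging x_σ and y_σ. Then s_{σ̄} = s_σ; consequently σ̄ is bad, x_{σ̄} = x_σ, y_{σ̄} = y_σ, and the map σ ↦ σ̄ is an involution on the set of bad permutations (i.e. the bar of σ̄ is σ). -/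
/-!
Write `s = s_σ`. Maximality of `x` forces `s(x - 1) = x + 1` and `s(k) ≤ k + 1` for all `k ≥ x`;
minimality of `y` then forces `s(k) = k + 1` on `[x, y)`. Consequently `σ(y) ≤ x + 1`: a larger
value `v ≤ y` is the record `s(v - 1) = v`, already attained before position `y`.
Swapping the positions `x` and `y` leaves the prefixes `{1, …, k}` with `k < x` or `k ≥ y`
setwise invariant, and for `x ≤ k < y` it trades `σ(x)` for `σ(y)`, both at most `k + 1`,
without touching the position where the record `k + 1` is attained (or, for `k = x`, the record
`x + 1` of the prefix `{1, …, x - 1}`). Hence `s_{σ̄} = s_σ`, and everything else follows.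
-/

section permSup

variable {n : ℕ} (σ : Equiv.Perm (Fin n))

lemma permSup_mono : Monotone (permSup n σ) := fun _ _ hkl =>
  Finset.sup_mono fun i hi => by
    simp only [Finset.mem_filter, Finset.mem_univ, true_and] at hi ⊢
    omega

lemma permSup_le (k : ℕ) : permSup n σ k ≤ n :=
  Finset.sup_le fun i _ => (σ i).isLt

lemma le_permSup {k : ℕ} {j : Fin n} (hj : (j : ℕ) + 1 ≤ k) : (σ j : ℕ) + 1 ≤ permSup n σ k :=
  Finset.le_sup (f := fun i : Fin n => (σ i : ℕ) + 1) (by simpa using hj)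

lemma exists_eq_permSup {k : ℕ} (hk : 0 < permSup n σ k) :
    ∃ j : Fin n, (j : ℕ) + 1 ≤ k ∧ (σ j : ℕ) + 1 = permSup n σ k := by
  have hne : (Finset.univ.filter fun i : Fin n => (i : ℕ) + 1 ≤ k).Nonempty := by
    rw [Finset.nonempty_iff_ne_empty]
    intro h
    rw [permSup, h, Finset.sup_empty] at hk
    exact hk.ne rfl
  obtain ⟨j, hj, hje⟩ := Finset.exists_mem_eq_sup _ hne fun i => (σ i : ℕ) + 1
  exact ⟨j, by simpa using hj, hje.symm⟩

lemma permSup_mul_le {k : ℕ} (τ : Equiv.Perm (Fin n))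
    (hτ : ∀ i : Fin n, (i : ℕ) + 1 ≤ k → (τ i : ℕ) + 1 ≤ k) :
    permSup n (σ * τ) k ≤ permSup n σ k :=
  Finset.sup_le fun i hi => le_permSup σ (hτ i (by simpa using hi))

lemma permSup_mul_swap_of_iff {k : ℕ} {a b : Fin n} (hab : (a : ℕ) + 1 ≤ k ↔ (b : ℕ) + 1 ≤ k) :
    permSup n (σ * Equiv.swap a b) k = permSup n σ k := by
  have hswap : ∀ i : Fin n, (i : ℕ) + 1 ≤ k → (Equiv.swap a b i : ℕ) + 1 ≤ k := by
    intro i hi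
    rw [Equiv.swap_apply_def]
    split_ifs with hia hib
    · exact hab.mp (hia ▸ hi)
    · exact hab.mpr (hib ▸ hi)
    · exact hi
  refine le_antisymm (permSup_mul_le σ _ hswap) ?_
  simpa only [Equiv.mul_swap_mul_self] using permSup_mul_le (σ * Equiv.swap a b) _ hswap

end permSup

/-- The set whose greatest element is `x_σ`. -/
def xCandidates (n : ℕ) (σ : Equiv.Perm (Fin n)) : Set ℕ :=
  {z | 2 ≤ z ∧ z ≤ n - 1 ∧ z < permSup n σ (z - 1)}

/-- The set whose least element is `y_σ`. -/
def yCandidates (n : ℕ) (σ : Equiv.Perm (Fin n)) (x : ℕ) : Set ℕ :=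
  {z | x + 1 ≤ z ∧ z ≤ n ∧ permSup n σ z = z}

section fold

variable {n : ℕ} {σ : Equiv.Perm (Fin n)} {x y : ℕ}

lemma permSup_le_succ_of_le (hx : IsGreatest (xCandidates n σ) x) {k : ℕ} (hk : x ≤ k) :
    permSup n σ k ≤ k + 1 := by
  by_contra! h
  have hx2 := hx.1.1
  have hkn : k + 1 ≤ n - 1 := by have := permSup_le σ k; omega
  have := hx.2 (show k + 1 ∈ xCandidates n σ from ⟨by omega, hkn, by simpa using h⟩)
  omega

lemma permSup_pred_eq (hx : IsGreatest (xCandidates n σ) x) : permSup n σ (x - 1) = x + 1 := by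
  have hlt := hx.1.2.2
  have hmono := permSup_mono σ (Nat.sub_le x 1)
  have hle := permSup_le_succ_of_le hx le_rfl
  omega

lemma permSup_eq_succ_of_mem_Ico (hx : IsGreatest (xCandidates n σ) x)
    (hy : y ∈ lowerBounds (yCandidates n σ x)) {k : ℕ} (hxk : x ≤ k) (hky : k < y) :
    permSup n σ k = k + 1 := by
  induction k, hxk using Nat.le_induction with
  | base =>
    have := permSup_mono σ (Nat.sub_le x 1)
    have := permSup_le_succ_of_le hx le_rfl
    have := permSup_pred_eq hx
    omega
  | succ k hxk ih =>
    have hk := ih (by omega)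
    have hmono := permSup_mono σ (k.le_add_right 1)
    have hle := permSup_le_succ_of_le hx (by omega : x ≤ k + 1)
    have hne : permSup n σ (k + 1) ≠ k + 1 := fun h => by
      have := hy ⟨by omega, by have := permSup_le σ k; omega, h⟩
      omega
    omega

lemma apply_le_of_isLeast (hx : IsGreatest (xCandidates n σ) x)
    (hy : IsLeast (yCandidates n σ x) y) {b : Fin n} (hb : (b : ℕ) + 1 = y) :
    (σ b : ℕ) ≤ x := by
  by_contra! h
  have hby : (σ b : ℕ) + 1 ≤ y := hy.1.2.2 ▸ le_permSup σ hb.le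
  have hrec := permSup_eq_succ_of_mem_Ico hx hy.2 (k := σ b) (by omega) (by omega)
  obtain ⟨j, hj, hjb⟩ := exists_eq_permSup σ (k := σ b) (by omega)
  have : j = b := σ.injective (Fin.ext (by omega))
  omega

lemma permSup_mul_swap_of_mem_Ico (hx : IsGreatest (xCandidates n σ) x)
    (hy : IsLeast (yCandidates n σ x) y) {a b : Fin n} (ha : (a : ℕ) + 1 = x)
    (hb : (b : ℕ) + 1 = y) {k : ℕ} (hxk : x ≤ k) (hky : k < y) :
    permSup n (σ * Equiv.swap a b) k = permSup n σ k := by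
  have hk := permSup_eq_succ_of_mem_Ico hx hy.2 hxk hky
  have hσb := apply_le_of_isLeast hx hy hb
  rw [hk]
  apply le_antisymm
  · refine Finset.sup_le fun i hi => ?_
    simp only [Finset.mem_filter, Finset.mem_univ, true_and] at hi
    rcases eq_or_ne i a with rfl | hia
    · simp only [Equiv.Perm.mul_apply, Equiv.swap_apply_left]
      omega
    · have hib : i ≠ b := by rintro rfl; omega
      simpa [Equiv.swap_apply_of_ne_of_ne hia hib, hk] using le_permSup σ hi
  · rcases hxk.eq_or_lt with rfl | hxk
    · calc x + 1 = permSup n σ (x - 1) := (permSup_pred_eq hx).symm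
        _ = permSup n (σ * Equiv.swap a b) (x - 1) :=
          (permSup_mul_swap_of_iff σ (by omega)).symm
        _ ≤ permSup n (σ * Equiv.swap a b) x := permSup_mono _ (Nat.sub_le x 1)
    · obtain ⟨j, hj, hjk⟩ := exists_eq_permSup σ (k := k) (by omega)
      have hja : j ≠ a := by
        rintro rfl
        have := le_permSup σ ha.le
        have := permSup_eq_succ_of_mem_Ico hx hy.2 le_rfl (by omega)
        omega
      have hjb : j ≠ b := by rintro rfl; omega
      simpa [Equiv.swap_apply_of_ne_of_ne hja hjb, hjk, hk] using
        le_permSup (σ * Equiv.swap a b) hj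

lemma permSup_mul_swap_eq (hx : IsGreatest (xCandidates n σ) x)
    (hy : IsLeast (yCandidates n σ x) y) {a b : Fin n} (ha : (a : ℕ) + 1 = x)
    (hb : (b : ℕ) + 1 = y) :
    permSup n (σ * Equiv.swap a b) = permSup n σ := by
  have hxy : x < y := hy.1.1
  funext k
  by_cases hxk : x ≤ k
  · by_cases hky : k < y
    · exact permSup_mul_swap_of_mem_Ico hx hy ha hb hxk hky
    · exact permSup_mul_swap_of_iff σ (by omega)
  · exact permSup_mul_swap_of_iff σ (by omega)

end fold

theorem bad_perm_involution_general (n : ℕ) (σ : Equiv.Perm (Fin n))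
    (hbad : ¬ IsGoodPerm n σ)
    (x y : ℕ)
    (hx : IsGreatest {z : ℕ | 2 ≤ z ∧ z ≤ n - 1 ∧ z < permSup n σ (z - 1)} x)
    (hy : IsLeast {z : ℕ | x + 1 ≤ z ∧ z ≤ n ∧ permSup n σ z = z} y)
    (a b : Fin n) (ha : (a : ℕ) + 1 = x) (hb : (b : ℕ) + 1 = y) :
    permSup n (σ * Equiv.swap a b) = permSup n σ ∧
    ¬ IsGoodPerm n (σ * Equiv.swap a b) ∧
    IsGreatest {z : ℕ | 2 ≤ z ∧ z ≤ n - 1 ∧ z < permSup n (σ * Equiv.swap a b) (z - 1)} x ∧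
    IsLeast {z : ℕ | x + 1 ≤ z ∧ z ≤ n ∧ permSup n (σ * Equiv.swap a b) z = z} y ∧
    (σ * Equiv.swap a b) * Equiv.swap a b = σ := by
  have hsup : permSup n (σ * Equiv.swap a b) = permSup n σ := permSup_mul_swap_eq hx hy ha hb
  unfold IsGoodPerm
  rw [hsup]
  exact ⟨rfl, hbad, hx, hy, Equiv.mul_swap_mul_self a b σ⟩

/-- **Claim (the folding involution on bad permutations).**  Let `σ ∈ S_n` be a bad
permutation, let `x = x_σ` be the largest `x ∈ {2, …, n-1}` with `s_σ(x-1) > x` and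
`y = y_σ` the smallest `y ∈ {x_σ+1, …, n}` with `s_σ(y) = y`, and let
`σ̄ = σ·(x_σ y_σ)` (so `σ̄(i) = σ(τ(i))` for the transposition `τ` exchanging `x_σ` and
`y_σ`).  Then `s_{σ̄} = s_σ`; consequently `σ̄` is bad, `x_{σ̄} = x_σ`, `y_{σ̄} = y_σ`,
and the bar involution applied to `σ̄` gives back `σ`. -/
theorem bad_perm_involution (n : ℕ) (hn : 2 ≤ n) (σ : Equiv.Perm (Fin n))
    (hbad : ¬ IsGoodPerm n σ)
    (x y : ℕ)
    (hx : IsGreatest {z : ℕ | 2 ≤ z ∧ z ≤ n - 1 ∧ z < permSup n σ (z - 1)} x)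
    (hy : IsLeast {z : ℕ | x + 1 ≤ z ∧ z ≤ n ∧ permSup n σ z = z} y)
    (a b : Fin n) (ha : (a : ℕ) + 1 = x) (hb : (b : ℕ) + 1 = y) :
    permSup n (σ * Equiv.swap a b) = permSup n σ ∧
    ¬ IsGoodPerm n (σ * Equiv.swap a b) ∧
    IsGreatest {z : ℕ | 2 ≤ z ∧ z ≤ n - 1 ∧ z < permSup n (σ * Equiv.swap a b) (z - 1)} x ∧
    IsLeast {z : ℕ | x + 1 ≤ z ∧ z ≤ n ∧ permSup n (σ * Equiv.swap a b) z = z} y ∧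
    (σ * Equiv.swap a b) * Equiv.swap a b = σ :=
  bad_perm_involution_general n σ hbad x y hx hy a b ha hb
end
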